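/- arXiv:2409.16650 — 7 statements merged into one kernel-verified Lean document; each statement's English description precedes it below -/
import Mathlib

section
/- The inverse of a Baxter permutation is a Baxter permutation. -/
/-- `π` is a permutation of `[n] = {1,…,n}`. -/
def IsPermOn (n : ℕ) (π : ℕ → ℕ) : Prop :=
  Set.BijOn π (Set.Icc 1 n) (Set.Icc 1 n)

/-- `π` (a map on `{1,…,n}`) is a Baxter permutation: it avoids the vincular
patterns 2-41-3 and 3-14-2. -/
def IsBaxter (n : ℕ) (π : ℕ → ℕ) : Prop :=
  ∀ i j k : ℕ, 1 ≤ i → i < j → j < k → k ≤ n →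
    ¬(π (j + 1) < π i ∧ π i < π k ∧ π k < π j) ∧
    ¬(π j < π k ∧ π k < π i ∧ π i < π (j + 1))

/-- `π` (a map on `{1,…,n}`) is a separable permutation: it avoids the classical
patterns 2413 and 3142. -/
def IsSeparablePerm (n : ℕ) (π : ℕ → ℕ) : Prop :=
  ∀ i1 i2 i3 i4 : ℕ, 1 ≤ i1 → i1 < i2 → i2 < i3 → i3 < i4 → i4 ≤ n →
    ¬(π i3 < π i1 ∧ π i1 < π i4 ∧ π i4 < π i2) ∧
    ¬(π i2 < π i4 ∧ π i4 < π i1 ∧ π i1 < π i3)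

/-- Scanning lemma: if a predicate holds at `b` and fails at `c > b`, there is a
switching index `m ∈ [b, c)` with `Q m` and `¬ Q (m+1)`. -/
lemma switch_aux (Q : ℕ → Prop) :
    ∀ c b, b < c → Q b → ¬ Q c → ∃ m, b ≤ m ∧ m < c ∧ Q m ∧ ¬ Q (m + 1) := by
  intro c
  induction c with
  | zero => intro b h; exact absurd h (Nat.not_lt_zero b)
  | succ c ih =>
    intro b hbc hb hc
    by_cases hqc : Q c
    · exact ⟨c, by omega, by omega, hqc, hc⟩
    · rcases Nat.lt_or_ge b c with h | h
      · obtain ⟨m, h1, h2, h3, h4⟩ := ih b h hb hqc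
        exact ⟨m, h1, by omega, h3, h4⟩
      · have hbc' : b = c := by omega
        exact absurd (hbc' ▸ hb) hqc

/-- The inverse of a Baxter permutation is a Baxter permutation. -/
theorem stmt3 (n : ℕ) (π σ : ℕ → ℕ) (hperm : IsPermOn n π)
    (hinv1 : ∀ i ∈ Set.Icc 1 n, σ (π i) = i)
    (hinv2 : ∀ i ∈ Set.Icc 1 n, π (σ i) = i)
    (hbax : IsBaxter n π) : IsBaxter n σ := by
  have hσ : ∀ x ∈ Set.Icc 1 n, σ x ∈ Set.Icc 1 n := by
    intro x hx
    obtain ⟨y, hy, hyx⟩ := hperm.surjOn hx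
    rw [← hyx, hinv1 y hy]; exact hy
  have hinj := hperm.injOn
  intro p q r hp hpq hqr hrn
  have hpmem : p ∈ Set.Icc 1 n := ⟨hp, by omega⟩
  have hqmem : q ∈ Set.Icc 1 n := ⟨by omega, by omega⟩
  have hq1mem : (q + 1) ∈ Set.Icc 1 n := ⟨by omega, by omega⟩
  have hrmem : r ∈ Set.Icc 1 n := ⟨by omega, hrn⟩
  have hσp := hσ p hpmem
  have hσq := hσ q hqmem
  have hσq1 := hσ (q + 1) hq1mem
  have hσr := hσ r hrmem
  have hπp : π (σ p) = p := hinv2 p hpmem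
  have hπq : π (σ q) = q := hinv2 q hqmem
  have hπq1 : π (σ (q + 1)) = q + 1 := hinv2 (q + 1) hq1mem
  have hπr : π (σ r) = r := hinv2 r hrmem
  have hbp := hσp.1; have hbp' := hσp.2
  have hbq := hσq.1; have hbq' := hσq.2
  have hbq1 := hσq1.1; have hbq1' := hσq1.2
  have hbr := hσr.1; have hbr' := hσr.2
  constructor
  · -- suppose σ (q+1) < σ p < σ r < σ q : value-adjacent 3142 in π
    rintro ⟨h1, h2, h3⟩
    -- scan from σ p (low: π < q+1) to σ r (high: π ≥ q+1)
    obtain ⟨m, hm1, hm2, hm3, hm4⟩ :=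
      switch_aux (fun x => π x < q + 1) (σ r) (σ p) h2
        (by simpa [hπp] using by omega) (by simp only [hπr]; omega)
    simp only [not_lt] at hm4
    have hmmem : m ∈ Set.Icc 1 n := ⟨by omega, by omega⟩
    have hm1mem : (m + 1) ∈ Set.Icc 1 n := ⟨by omega, by omega⟩
    -- strictness: π m < q and q + 1 < π (m+1)
    have hmd : π m < q := by
      have hle : π m ≤ q := by omega
      rcases Nat.lt_or_ge (π m) q with h | h
      · exact h
      · have heq : π m = π (σ q) := by omega
        have : m = σ q := hinj hmmem hσq heq
        omega
    have hma : q + 1 < π (m + 1) := by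
      rcases Nat.lt_or_ge (q + 1) (π (m + 1)) with h | h
      · exact h
      · have heq : π (m + 1) = π (σ (q + 1)) := by omega
        have : m + 1 = σ (q + 1) := hinj hm1mem hσq1 heq
        omega
    have hB := (hbax (σ (q + 1)) m (σ q) hσq1.1 (by omega) (by omega) hσq.2).2
    exact hB ⟨by omega, by omega, by omega⟩
  · -- suppose σ q < σ r < σ p < σ (q+1) : value-adjacent 2413 in π
    rintro ⟨h1, h2, h3⟩
    -- scan from σ r (high: π ≥ q+1) to σ p (low: π < q+1)
    obtain ⟨m, hm1, hm2, hm3, hm4⟩ :=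
      switch_aux (fun x => q + 1 ≤ π x) (σ p) (σ r) h2
        (by simp only [hπr]; omega) (by simp only [not_le, hπp]; omega)
    simp only [not_le] at hm4
    have hmmem : m ∈ Set.Icc 1 n := ⟨by omega, by omega⟩
    have hm1mem : (m + 1) ∈ Set.Icc 1 n := ⟨by omega, by omega⟩
    have hma : π (m + 1) < q := by
      rcases Nat.lt_or_ge (π (m + 1)) q with h | h
      · exact h
      · have heq : π (m + 1) = π (σ q) := by omega
        have : m + 1 = σ q := hinj hm1mem hσq heq
        omega
    have hmd : q + 1 < π m := by
      rcases Nat.lt_or_ge (q + 1) (π m) with h | h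
      · exact h
      · have heq : π m = π (σ (q + 1)) := by omega
        have : m = σ (q + 1) := hinj hmmem hσq1 heq
        omega
    have hB := (hbax (σ q) m (σ (q + 1)) hσq.1 (by omega) (by omega) hσq1.2).1
    exact hB ⟨by omega, by omega, by omega⟩
end

section
/- Let π be a Baxter permutation of [n] and for 1 ≤ i ≤ n−1 say i is an 'l-step' if the node labeled i+1 in MinC(π) is a left child of its parent, and an 'r-step' otherwise. If i is an 'l-step' and the node labeled i (position π^{-1}(i)) has a left child in MinC(π), then the node labeled i+1 is the left child of the node labeled i. -/
/-- Binary trees with natural-number labels at internal nodes. -/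
inductive BTree where
  | leaf : BTree
  | node : BTree → ℕ → BTree → BTree

/-- Membership of a label in a binary tree. -/
def BTree.mem : BTree → ℕ → Prop
  | .leaf, _ => False
  | .node l x r, v => v = x ∨ l.mem v ∨ r.mem v

/-- Inorder traversal of a binary tree. -/
def BTree.inorder : BTree → List ℕ
  | .leaf => []
  | .node l x r => l.inorder ++ x :: r.inorder

/-- The label at the root, if any. -/
def BTree.rootLabel : BTree → Option ℕ
  | .leaf => none
  | .node _ x _ => some x

/-- `IsMinC S t` holds iff `t` is the minimum Cartesian tree of the sequence `S`:
the root carries the minimum of `S` and the subtrees are the minimum Cartesian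
trees of the prefix and suffix around it. -/
inductive IsMinC : List ℕ → BTree → Prop where
  | leaf : IsMinC [] .leaf
  | node : ∀ (l r : List ℕ) (x : ℕ) (tl tr : BTree),
      (∀ y ∈ l, x < y) → (∀ y ∈ r, x < y) →
      IsMinC l tl → IsMinC r tr → IsMinC (l ++ x :: r) (.node tl x tr)

/-- The sequence `(π(1), …, π(n))` as a list. -/
def permList (n : ℕ) (π : ℕ → ℕ) : List ℕ :=
  (List.range n).map (fun k => π (k + 1))

/-- In `t`, the node labeled `c` is the left child of the node labeled `p`. -/
def leftChildRel : BTree → ℕ → ℕ → Prop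
  | .leaf, _, _ => False
  | .node l x r, p, c =>
      (x = p ∧ l.rootLabel = some c) ∨ leftChildRel l p c ∨ leftChildRel r p c

/-- In `t`, the node labeled `c` is the right child of the node labeled `p`. -/
def rightChildRel : BTree → ℕ → ℕ → Prop
  | .leaf, _, _ => False
  | .node l x r, p, c =>
      (x = p ∧ r.rootLabel = some c) ∨ rightChildRel l p c ∨ rightChildRel r p c

/-! In a minimum Cartesian tree, `c` is the left child of `p` exactly when `p` is the nearest
smaller entry to the right of `c` and the nearest smaller entry to the left of `c`, if any, is
smaller than `p`. Suppose `i + 1` is the left child of some `p < i`. If `i` stands to the left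
of `i + 1`, the nearest entry smaller than `i + 1` on its left is smaller than `p`, hence lies
to the right of `i`, and is followed by an entry larger than `i`: with `i` and `p` this is a
3-14-2 pattern. If `i` stands to the right of `i + 1`, it also stands to the right of `p`, and
so does the left child `c` of `i`. The nearest entry smaller than `c` on its left is then not to
the left of `p`, is smaller than `i` and is followed by an entry at least `c > i + 1`: with
`i + 1` and `i` this is a 3-14-2 pattern. -/

def AvoidsPattern3_14_2 (L : List ℕ) : Prop :=
  ∀ i j k : ℕ, i < j → j < k →
    ∀ x ∈ L[i]?, ∀ y ∈ L[j]?, ∀ w ∈ L[j + 1]?, ∀ z ∈ L[k]?,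
      ¬(y < z ∧ z < x ∧ x < w)

/-- Necessary conditions on `L` for its entry `c` at position `a` to be the left child of its
entry `p` at position `b` in the minimum Cartesian tree of `L`. The field `escape` encodes that
the nearest entry smaller than `c` on its left, if any, is smaller than `p`, in the form in which
it is used: every such entry is followed, before position `a`, by adjacent entries `z < p` and
`w ≥ c`. -/
structure SeqLeftChild (L : List ℕ) (c p a b : ℕ) : Prop where
  lt : a < b
  getElem?_child : L[a]? = some c
  getElem?_parent : L[b]? = some p
  parent_lt : p < c
  child_lt_of_between : ∀ m, a < m → m < b → ∀ y ∈ L[m]?, c < y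
  escape : ∀ m, m < a → ∀ y ∈ L[m]?, y < c →
    ∃ l, m ≤ l ∧ l < a ∧ ∃ z ∈ L[l]?, ∃ w ∈ L[l + 1]?, z < p ∧ c ≤ w

namespace SeqLeftChild

variable {L : List ℕ} {c p a b : ℕ}

theorem exists_getElem?_zero (h : SeqLeftChild L c p a b) : ∃ y, L[0]? = some y := by
  have ha := (List.getElem?_eq_some_iff.mp h.getElem?_child).1
  exact ⟨_, List.getElem?_eq_getElem (by omega)⟩

theorem of_root {l r s : List ℕ} {x : ℕ} (hl : ∀ y ∈ l, c < y) (hr : ∀ y ∈ r, c < y)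
    (hx : x < c) : SeqLeftChild (l ++ c :: r ++ x :: s) c x l.length (l ++ c :: r).length := by
  have get : ∀ m < (l ++ c :: r).length, (l ++ c :: r ++ x :: s)[m]? = (l ++ c :: r)[m]? :=
    fun m hm => List.getElem?_append_left hm
  refine ⟨by simp, ?_, by simp, hx, ?_, ?_⟩
  · rw [get _ (by simp)]; simp
  · intro m ham hmb y hy
    rw [get m hmb, List.getElem?_append_right ham.le,
      show m - l.length = m - l.length - 1 + 1 by omega, List.getElem?_cons_succ] at hy
    exact hr y (List.mem_of_getElem? hy)
  · intro m hma y hy hyc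
    rw [get m (by simp; omega), List.getElem?_append_left hma] at hy
    exact absurd (hl y (List.mem_of_getElem? hy)) (by omega)

theorem append_right (h : SeqLeftChild L c p a b) (s : List ℕ) :
    SeqLeftChild (L ++ s) c p a b := by
  have hb : b < L.length := (List.getElem?_eq_some_iff.mp h.getElem?_parent).1
  have get : ∀ m ≤ b, (L ++ s)[m]? = L[m]? := fun m hm => List.getElem?_append_left (by omega)
  have hab := h.lt
  refine ⟨hab, ?_, ?_, h.parent_lt, ?_, ?_⟩
  · rw [get a hab.le]; exact h.getElem?_child
  · rw [get b le_rfl]; exact h.getElem?_parent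
  · intro m ham hmb
    rw [get m hmb.le]
    exact h.child_lt_of_between m ham hmb
  · intro m hma y hy hyc
    rw [get m (by omega)] at hy
    obtain ⟨l, hml, hla, z, hz, w, hw, hzp, hcw⟩ := h.escape m hma y hy hyc
    exact ⟨l, hml, hla, z, by rwa [get l (by omega)], w, by rwa [get (l + 1) (by omega)],
      hzp, hcw⟩

theorem cons (h : SeqLeftChild L c p a b) {x : ℕ} (hx : x < p) :
    SeqLeftChild (x :: L) c p (a + 1) (b + 1) := by
  have hab := h.lt
  refine ⟨by omega, h.getElem?_child, h.getElem?_parent, h.parent_lt, ?_, ?_⟩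
  · rintro (_ | m) ham hmb
    · omega
    · exact h.child_lt_of_between m (by omega) (by omega)
  · rintro (_ | m) hma y hy hyc
    · by_cases hsmall : ∃ k < a, ∃ y ∈ L[k]?, y < c
      · obtain ⟨k, hka, y', hy', hyc'⟩ := hsmall
        obtain ⟨l, -, hla, rest⟩ := h.escape k hka y' hy' hyc'
        exact ⟨l + 1, by omega, by omega, rest⟩
      · push Not at hsmall
        refine ⟨0, le_rfl, by omega, x, rfl, ?_⟩
        rcases Nat.eq_zero_or_pos a with rfl | ha
        · exact ⟨c, h.getElem?_child, hx, le_rfl⟩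
        · obtain ⟨w, hw⟩ := h.exists_getElem?_zero
          exact ⟨w, hw, hx, hsmall 0 ha w hw⟩
    · obtain ⟨l, hml, hla, rest⟩ := h.escape m (by omega) y hy hyc
      exact ⟨l + 1, by omega, by omega, rest⟩

theorem append_left (h : SeqLeftChild L c p a b) (hhead : ∀ y ∈ L[0]?, y < p) (l : List ℕ) :
    SeqLeftChild (l ++ L) c p (l.length + a) (l.length + b) := by
  have get : ∀ k, (l ++ L)[l.length + k]? = L[k]? := fun k => by
    rw [List.getElem?_append_right (by omega), Nat.add_sub_cancel_left]
  have hab := h.lt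
  refine ⟨by omega, by rw [get]; exact h.getElem?_child, by rw [get]; exact h.getElem?_parent,
    h.parent_lt, ?_, ?_⟩
  · intro m ham hmb
    obtain ⟨k, rfl⟩ : ∃ k, m = l.length + k := ⟨m - l.length, by omega⟩
    rw [get]
    exact h.child_lt_of_between k (by omega) (by omega)
  · intro m hma y hy hyc
    obtain ⟨k, hka, hmk, y', hy', hyc'⟩ :
        ∃ k < a, m ≤ l.length + k ∧ ∃ y' ∈ L[k]?, y' < c := by
      by_cases hm : l.length ≤ m
      · obtain ⟨k, rfl⟩ : ∃ k, m = l.length + k := ⟨m - l.length, by omega⟩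
        exact ⟨k, by omega, le_rfl, y, by rwa [get] at hy, hyc⟩
      · obtain ⟨y₀, hy₀⟩ := h.exists_getElem?_zero
        have hy₀p := hhead y₀ hy₀
        have hpc := h.parent_lt
        refine ⟨0, Nat.pos_of_ne_zero ?_, by omega, y₀, hy₀, by omega⟩
        rintro rfl
        rw [h.getElem?_child] at hy₀
        cases hy₀
        omega
    obtain ⟨j, hkj, hja, z, hz, w, hw, hzp, hcw⟩ := h.escape k hka y' hy' hyc'
    refine ⟨l.length + j, by omega, by omega, z, by rwa [get], w, ?_, hzp, hcw⟩
    rwa [show l.length + j + 1 = l.length + (j + 1) by omega, get]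

end SeqLeftChild

theorem IsMinC.exists_seqLeftChild {L : List ℕ} {t : BTree} (ht : IsMinC L t) {p c : ℕ}
    (h : leftChildRel t p c) : ∃ a b, SeqLeftChild L c p a b := by
  induction ht with
  | leaf => exact h.elim
  | node l r x tl tr hxl hxr hml _ ihl ihr =>
    rcases h with ⟨rfl, hroot⟩ | h | h
    · cases hml with
      | leaf => cases hroot
      | node l₁ r₁ y _ _ hl₁ hr₁ _ _ =>
        cases hroot
        exact ⟨_, _, .of_root hl₁ hr₁ (hxl _ (by simp))⟩
    · obtain ⟨a, b, h⟩ := ihl h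
      exact ⟨a, b, h.append_right _⟩
    · obtain ⟨a, b, h⟩ := ihr h
      have hxp : x < p := hxr p (List.mem_of_getElem? h.getElem?_parent)
      exact ⟨_, _, (h.cons hxp).append_left (fun y hy => by cases hy; exact hxp) l⟩

namespace AvoidsPattern3_14_2

variable {L : List ℕ} (hL : AvoidsPattern3_14_2 L)
include hL

theorem le_parent_of_lt_child {c p a b q v : ℕ} (h : SeqLeftChild L c p a b) (hqa : q < a)
    (hv : L[q]? = some v) (hvc : v < c) : v ≤ p := by
  obtain ⟨l, hql, hla, z, hz, w, hw, hzp, hcw⟩ := h.escape q hqa v hv hvc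
  rcases hql.eq_or_lt with rfl | hql
  · rw [hv] at hz
    cases hz
    omega
  · by_contra! hpv
    have hab := h.lt
    exact hL q l b hql (by omega) v hv z hz w hw p h.getElem?_parent ⟨hzp, hpv, by omega⟩

theorem lt_of_parent_lt {c p a b c' v s q : ℕ} (hnd : L.Nodup) (h₁ : SeqLeftChild L c p a b)
    (h₂ : SeqLeftChild L c' v s q) (hpv : p < v) (hvc : v < c) (hcc' : c ≤ c') : q < a := by
  have hab := h₁.lt
  have hsq := h₂.lt
  have hvc' := h₂.parent_lt
  by_contra! haq
  have hbq : b < q := by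
    by_contra! hqb
    rcases haq.eq_or_lt with rfl | haq
    · have := h₁.getElem?_child.symm.trans h₂.getElem?_parent
      cases this
      omega
    rcases hqb.eq_or_lt with rfl | hqb
    · have := h₁.getElem?_parent.symm.trans h₂.getElem?_parent
      cases this
      omega
    · have := h₁.child_lt_of_between q haq hqb v h₂.getElem?_parent
      omega
  have hbs : b < s := by
    by_contra! hsb
    rcases hsb.eq_or_lt with rfl | hsb
    · have := h₁.getElem?_parent.symm.trans h₂.getElem?_child
      cases this
      omega
    · have := h₂.child_lt_of_between b hsb hbq p h₁.getElem?_parent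
      omega
  have hcc' : c < c' := by
    refine hcc'.lt_of_ne fun hc => ?_
    subst hc
    have ha : a < L.length := (List.getElem?_eq_some_iff.mp h₁.getElem?_child).1
    have := (List.getElem?_inj ha hnd).mp (h₁.getElem?_child.trans h₂.getElem?_child.symm)
    omega
  obtain ⟨l, hbl, hls, z, hz, w, hw, hzv, hcw⟩ :=
    h₂.escape b hbs p h₁.getElem?_parent (by omega)
  exact hL a l q (by omega) (by omega) c h₁.getElem?_child z hz w hw v h₂.getElem?_parent
    ⟨hzv, hvc, by omega⟩

theorem parent_eq_of_seqLeftChild_succ {i c p a b s q : ℕ} (hnd : L.Nodup)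
    (h₁ : SeqLeftChild L (i + 1) p a b) (h₂ : SeqLeftChild L c i s q) : p = i := by
  have := h₁.parent_lt
  by_contra hne
  have hqa := hL.lt_of_parent_lt hnd h₁ h₂ (by omega) (by omega) h₂.parent_lt
  have := hL.le_parent_of_lt_child h₁ hqa h₂.getElem?_parent (by omega)
  omega

end AvoidsPattern3_14_2

theorem mem_getElem?_permList {n : ℕ} {π : ℕ → ℕ} {k v : ℕ} :
    v ∈ (permList n π)[k]? ↔ k < n ∧ π (k + 1) = v := by
  by_cases hk : k < n <;> simp [permList, hk]

theorem IsBaxter.avoidsPattern3_14_2_permList {n : ℕ} {π : ℕ → ℕ} (h : IsBaxter n π) :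
    AvoidsPattern3_14_2 (permList n π) := by
  intro i j k hij hjk x hx y hy w hw z hz
  simp only [mem_getElem?_permList] at hx hy hw hz
  obtain ⟨-, rfl⟩ := hx
  obtain ⟨-, rfl⟩ := hy
  obtain ⟨-, rfl⟩ := hw
  obtain ⟨hk, rfl⟩ := hz
  exact (h (i + 1) (j + 1) (k + 1) (by omega) (by omega) (by omega) (by omega)).2

theorem IsPermOn.nodup_permList {n : ℕ} {π : ℕ → ℕ} (h : IsPermOn n π) :
    (permList n π).Nodup := by
  refine List.Nodup.map_on (fun a ha b hb hab => ?_) List.nodup_range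
  rw [List.mem_range] at ha hb
  have := h.injOn (by simp; omega : a + 1 ∈ Set.Icc 1 n) (by simp; omega) hab
  omega

theorem stmt8_general (n : ℕ) (π : ℕ → ℕ) (t : BTree) (i : ℕ)
    (hbax : IsBaxter n π) (hperm : IsPermOn n π)
    (ht : IsMinC (permList n π) t)
    (hlstep : ∃ p, leftChildRel t p (i + 1))
    (hleft : ∃ c, leftChildRel t i c) :
    leftChildRel t i (i + 1) := by
  obtain ⟨p, hp⟩ := hlstep
  obtain ⟨c, hc⟩ := hleft
  obtain ⟨a, b, h₁⟩ := ht.exists_seqLeftChild hp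
  obtain ⟨s, q, h₂⟩ := ht.exists_seqLeftChild hc
  obtain rfl : p = i :=
    hbax.avoidsPattern3_14_2_permList.parent_eq_of_seqLeftChild_succ hperm.nodup_permList h₁ h₂
  exact hp

/-- If π is Baxter, the node labeled i+1 in MinC(π) is a left child of its
parent, and the node labeled i has a left child, then the node labeled i+1 is
the left child of the node labeled i. -/
theorem stmt8 (n : ℕ) (π : ℕ → ℕ) (t : BTree) (i : ℕ)
    (hbax : IsBaxter n π) (hperm : IsPermOn n π)
    (ht : IsMinC (permList n π) t)
    (hi1 : 1 ≤ i) (hi2 : i ≤ n - 1)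
    (hlstep : ∃ p, leftChildRel t p (i + 1))
    (hleft : ∃ c, leftChildRel t i c) :
    leftChildRel t i (i + 1) :=
  stmt8_general n π t i hbax hperm ht hlstep hleft
end

section
/- Let π be a Baxter permutation of [n] and suppose that in MinC(π) the node labeled i (the node at the position of value i) has a right child. If the node labeled i+1 is a right child of its parent, then the node labeled i+1 is the right child of the node labeled i. -/
lemma getD_app_left {l : List ℕ} {q : ℕ} (x : ℕ) (r : List ℕ) (h : q < l.length) :
    (l ++ x :: r).getD q 0 = l.getD q 0 := by
  simp [List.getD, List.getElem?_append_left h]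

lemma getD_app_mid (l : List ℕ) (x : ℕ) (r : List ℕ) :
    (l ++ x :: r).getD l.length 0 = x := by
  simp [List.getD, List.getElem?_append_right (le_refl l.length)]

lemma getD_app_right (l : List ℕ) (x : ℕ) (r : List ℕ) (q : ℕ) :
    (l ++ x :: r).getD (l.length + 1 + q) 0 = r.getD q 0 := by
  have h : l.length ≤ l.length + 1 + q := by omega
  have h2 : l.length + 1 + q - l.length = q + 1 := by omega
  simp [List.getD, List.getElem?_append_right h, h2]

lemma getD_app_right' (l : List ℕ) (x : ℕ) (r : List ℕ) {q : ℕ} (h : l.length < q) :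
    (l ++ x :: r).getD q 0 = r.getD (q - l.length - 1) 0 := by
  have h2 := getD_app_right l x r (q - l.length - 1)
  rwa [show l.length + 1 + (q - l.length - 1) = q by omega] at h2

lemma getD_mem {L : List ℕ} {q : ℕ} (h : q < L.length) : L.getD q 0 ∈ L := by
  rw [List.getD_eq_getElem L 0 h]; exact List.getElem_mem h

lemma rc_decomp {L : List ℕ} {t : BTree} (ht : IsMinC L t) :
    ∀ p c : ℕ, rightChildRel t p c →
    ∃ P C, P < C ∧ C < L.length ∧ L.getD P 0 = p ∧ L.getD C 0 = c ∧ p < c ∧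
      (∀ q, P < q → q < C → c < L.getD q 0) ∧
      (∀ q, C < q → q < L.length → L.getD q 0 < c →
        L.getD q 0 < p ∨ ∃ q', C < q' ∧ q' < q ∧ L.getD q' 0 < p) := by
  induction ht with
  | leaf => intro p c h; exact absurd h (by simp [rightChildRel])
  | node l r x tl tr hl hr htl htr IHl IHr =>
    intro p c h
    have hlen : (l ++ x :: r).length = l.length + 1 + r.length := by simp; omega
    rcases h with ⟨hxp, hroot⟩ | h | h
    · -- c is the right child of the root x = p
      cases htr with
      | leaf => simp [BTree.rootLabel] at hroot
      | node la ra x' tla tra hla hra htla htra =>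
        have hx'c : x' = c := by simpa [BTree.rootLabel] using hroot
        subst hx'c
        refine ⟨l.length, l.length + 1 + la.length, by omega, ?_, ?_, ?_, ?_, ?_, ?_⟩
        · simp; omega
        · rw [getD_app_mid]; exact hxp
        · rw [getD_app_right]; exact getD_app_mid la x' ra
        · rw [← hxp]; exact hr x' (by simp)
        · intro q hq1 hq2
          have hq3 : q - l.length - 1 < la.length := by omega
          rw [getD_app_right' l x _ (by omega), getD_app_left x' ra hq3]
          exact hla _ (getD_mem hq3)
        · intro q hq1 hq2 hq3
          exfalso
          have h5 : q - l.length - 1 - la.length - 1 < ra.length := by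
            simp at hq2; omega
          rw [getD_app_right' l x _ (by omega),
            getD_app_right' la x' ra (by omega)] at hq3
          exact absurd (hra _ (getD_mem h5)) (by omega)
    · -- in the left subtree
      obtain ⟨P, C, h1, h2, h3, h4, h5, h6, h7⟩ := IHl p c h
      have hpl : p ∈ l := by rw [← h3]; exact getD_mem (by omega)
      refine ⟨P, C, h1, by omega, ?_, ?_, h5, ?_, ?_⟩
      · rw [getD_app_left x r (by omega)]; exact h3
      · rw [getD_app_left x r h2]; exact h4
      · intro q hq1 hq2
        rw [getD_app_left x r (by omega)]; exact h6 q hq1 hq2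
      · intro q hq1 hq2 hq3
        rcases lt_trichotomy q l.length with hq | hq | hq
        · rw [getD_app_left x r hq] at hq3 ⊢
          rcases h7 q hq1 hq hq3 with h | ⟨q', hq'1, hq'2, hq'3⟩
          · exact Or.inl h
          · exact Or.inr ⟨q', hq'1, hq'2, by rw [getD_app_left x r (by omega)]; exact hq'3⟩
        · subst hq
          rw [getD_app_mid] at hq3 ⊢
          exact Or.inl (hl p hpl)
        · exact Or.inr ⟨l.length, by omega, hq, by rw [getD_app_mid]; exact hl p hpl⟩
    · -- in the right subtree
      obtain ⟨P, C, h1, h2, h3, h4, h5, h6, h7⟩ := IHr p c h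
      refine ⟨l.length + 1 + P, l.length + 1 + C, by omega, by omega, ?_, ?_, h5, ?_, ?_⟩
      · rw [getD_app_right]; exact h3
      · rw [getD_app_right]; exact h4
      · intro q hq1 hq2
        rw [getD_app_right' l x r (by omega)]
        exact h6 _ (by omega) (by omega)
      · intro q hq1 hq2 hq3
        rw [getD_app_right' l x r (by omega)] at hq3 ⊢
        rcases h7 _ (by omega) (by omega) hq3 with h | ⟨q', hq'1, hq'2, hq'3⟩
        · exact Or.inl h
        · refine Or.inr ⟨l.length + 1 + q', by omega, by omega, ?_⟩
          rw [getD_app_right]; exact hq'3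

lemma rc_build {p c : ℕ} {L : List ℕ} {t : BTree} (ht : IsMinC L t) :
    ∀ P C : ℕ, P < C → C < L.length → L.getD P 0 = p → L.getD C 0 = c → p < c →
    (∀ q, P < q → q < C → c < L.getD q 0) →
    (∀ q, C < q → q < L.length → L.getD q 0 ≠ c) →
    (∀ q, C < q → q < L.length → L.getD q 0 < c →
      L.getD q 0 < p ∨ ∃ q', C < q' ∧ q' < q ∧ L.getD q' 0 < p) →
    rightChildRel t p c := by
  induction ht with
  | leaf => intro P C h1 h2; simp at h2
  | node l r x tl tr hl hr htl htr IHl IHr =>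
    intro P C hPC hClen hPv hCv hpc hmid hne hf
    have hlen : (l ++ x :: r).length = l.length + 1 + r.length := by simp; omega
    -- x is smaller than every other element
    have hminL : ∀ q, q < l.length → x < (l ++ x :: r).getD q 0 := by
      intro q hq
      rw [getD_app_left x r hq]
      exact hl _ (getD_mem hq)
    have hminR : ∀ q, l.length < q → q < (l ++ x :: r).length → x < (l ++ x :: r).getD q 0 := by
      intro q hq1 hq2
      rw [getD_app_right' l x r hq1]
      exact hr _ (getD_mem (by omega))
    rcases lt_trichotomy l.length P with hXP | hXP | hXP
    · -- min is left of P : recurse into the right subtree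
      refine Or.inr (Or.inr (IHr (P - l.length - 1) (C - l.length - 1)
        (by omega) (by omega) ?_ ?_ hpc ?_ ?_ ?_))
      · rw [← getD_app_right' l x r hXP]; exact hPv
      · rw [← getD_app_right' l x r (by omega : l.length < C)]; exact hCv
      · intro q hq1 hq2
        have := hmid (l.length + 1 + q) (by omega) (by omega)
        rwa [getD_app_right] at this
      · intro q hq1 hq2
        have := hne (l.length + 1 + q) (by omega) (by omega)
        rwa [getD_app_right] at this
      · intro q hq1 hq2 hq3
        have h4 := hf (l.length + 1 + q) (by omega) (by omega)
          (by rw [getD_app_right]; exact hq3)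
        rw [getD_app_right] at h4
        rcases h4 with h | ⟨q', hq'1, hq'2, hq'3⟩
        · exact Or.inl h
        · refine Or.inr ⟨q' - l.length - 1, by omega, by omega, ?_⟩
          rw [← getD_app_right' l x r (by omega : l.length < q')]; exact hq'3
    · -- x = p is the root; show c is the root of the right subtree
      have hxp : x = p := by rw [← hPv, ← hXP, getD_app_mid]
      cases htr with
      | leaf =>
        exfalso
        have : (l ++ x :: ([] : List ℕ)).length = l.length + 1 := by simp
        omega
      | node la ra x' tla tra hla hra htla htra =>
        by_cases hx'c : x' = c
        · exact Or.inl ⟨hxp, by simp [BTree.rootLabel, hx'c]⟩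
        · exfalso
          -- position of x' in L
          set Q := l.length + 1 + la.length with hQ
          have hQlen : Q < (l ++ x :: (la ++ x' :: ra)).length := by simp; omega
          have hQv : (l ++ x :: (la ++ x' :: ra)).getD Q 0 = x' := by
            rw [getD_app_right]; exact getD_app_mid la x' ra
          -- c is an element of the right subtree list, distinct from x'
          have hcr : c ∈ la ++ x' :: ra := by
            rw [← hCv, getD_app_right' l x _ (by omega)]
            exact getD_mem (by simp at hClen ⊢; omega)
          have hx'c2 : x' < c := by
            rcases List.mem_append.1 hcr with h | h
            · exact hla _ h
            · rcases List.mem_cons.1 h with h | h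
              · exact absurd h.symm hx'c
              · exact hra _ h
          have hQC : Q ≠ C := by
            intro h; rw [h, hCv] at hQv; exact hx'c hQv.symm
          rcases lt_or_gt_of_ne hQC with h | h
          · -- P < Q < C : middle condition says c < x'
            have := hmid Q (by omega) h
            rw [hQv] at this; omega
          · -- C < Q : first-smaller condition
            rcases hf Q h hQlen (by rw [hQv]; exact hx'c2) with h2 | ⟨q', hq'1, hq'2, hq'3⟩
            · rw [hQv] at h2
              have : x < x' := hr x' (by simp)
              omega
            · have := hminR q' (by omega) (by omega)
              omega
    · -- min strictly right of P : impossible unless right of C too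
      rcases lt_trichotomy l.length C with hXC | hXC | hXC
      · -- P < X < C : contradiction
        exfalso
        have h1 := hmid l.length hXP hXC
        rw [getD_app_mid] at h1
        have h2 : x < c := by
          rw [← hCv]; exact hminR C hXC hClen
        omega
      · -- X = C : x = c but x < p
        exfalso
        have hxc : x = c := by rw [← hCv, ← hXC, getD_app_mid]
        have : x < p := by rw [← hPv]; exact hminL P (by omega)
        omega
      · -- C < X : recurse into the left subtree
        refine Or.inr (Or.inl (IHl P C hPC hXC ?_ ?_ hpc ?_ ?_ ?_))
        · rw [← getD_app_left x r (by omega : P < l.length)]; exact hPv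
        · rw [← getD_app_left x r hXC]; exact hCv
        · intro q hq1 hq2
          have := hmid q hq1 (by omega)
          rwa [getD_app_left x r (by omega)] at this
        · intro q hq1 hq2
          have := hne q hq1 (by omega)
          rwa [getD_app_left x r hq2] at this
        · intro q hq1 hq2 hq3
          have h4 := hf q hq1 (by omega) (by rw [getD_app_left x r hq2]; exact hq3)
          rw [getD_app_left x r hq2] at h4
          rcases h4 with h | ⟨q', hq'1, hq'2, hq'3⟩
          · exact Or.inl h
          · refine Or.inr ⟨q', hq'1, hq'2, ?_⟩
            rw [← getD_app_left x r (by omega : q' < l.length)]; exact hq'3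

/-- If π is Baxter, the node labeled i in MinC(π) has a right child, and the
node labeled i+1 is a right child of its parent, then the node labeled i+1 is
the right child of the node labeled i. -/
theorem stmt9 (n : ℕ) (π : ℕ → ℕ) (t : BTree) (i : ℕ)
    (hbax : IsBaxter n π) (hperm : IsPermOn n π)
    (ht : IsMinC (permList n π) t)
    (hi1 : 1 ≤ i) (hi2 : i ≤ n - 1)
    (hright : ∃ c, rightChildRel t i c)
    (hrstep : ∃ p, rightChildRel t p (i + 1)) :
    rightChildRel t i (i + 1) := by
  set L := permList n π with hLdef
  have hlen : L.length = n := by simp [hLdef, permList]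
  have hval : ∀ q, q < n → L.getD q 0 = π (q + 1) := by
    intro q hq
    rw [hLdef]
    rw [List.getD_eq_getElem _ 0 (by simp [permList]; omega)]
    simp [permList]
  have hinj : ∀ q1 q2, q1 < n → q2 < n → L.getD q1 0 = L.getD q2 0 → q1 = q2 := by
    intro q1 q2 h1 h2 h
    rw [hval q1 h1, hval q2 h2] at h
    have := hperm.2.1 (Set.mem_Icc.2 ⟨by omega, by omega⟩)
      (Set.mem_Icc.2 ⟨by omega, by omega⟩) h
    omega
  have hbaxL : ∀ a b d, a < b → b < d → d < n →
      ¬(L.getD (b+1) 0 < L.getD a 0 ∧ L.getD a 0 < L.getD d 0 ∧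
        L.getD d 0 < L.getD b 0) := by
    intro a b d h1 h2 h3 hcon
    rw [hval a (by omega), hval b (by omega), hval d (by omega),
      hval (b+1) (by omega)] at hcon
    exact (hbax (a+1) (b+1) (d+1) (by omega) (by omega) (by omega) (by omega)).1 hcon
  obtain ⟨c0, hc0⟩ := hright
  obtain ⟨P, C0, hPC0, hC0len, hPv, hC0v, hic0, hmid0, -⟩ := rc_decomp ht i c0 hc0
  obtain ⟨p0, hp0⟩ := hrstep
  obtain ⟨Pp, C, hPpC, hClen, hPpv, hCv, hp0i, hmid2, hf2⟩ := rc_decomp ht p0 (i+1) hp0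
  have hP1 : i < L.getD (P+1) 0 := by
    rcases eq_or_lt_of_le (show P + 1 ≤ C0 by omega) with h | h
    · rw [h, hC0v]; omega
    · have := hmid0 (P+1) (by omega) h; omega
  have hPneC : P ≠ C := fun h => by rw [h, hCv] at hPv; omega
  rcases lt_or_gt_of_ne hPneC with hPltC | hCltP
  · -- i appears before i+1
    by_cases hmidall : ∀ q, P < q → q < C → i + 1 < L.getD q 0
    · -- all intermediate values are larger than i+1: build the right-child relation
      refine rc_build ht P C hPltC hClen hPv hCv (by omega) hmidall ?_ ?_
      · intro q h1 h2 he
        have := hinj q C (by omega) (by omega) (he.trans hCv.symm)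
        omega
      · intro q h1 h2 h3
        have h4 : L.getD q 0 ≠ i := fun he => by
          have := hinj q P (by omega) (by omega) (he.trans hPv.symm)
          omega
        exact Or.inl (by omega)
    · -- some intermediate value is small: find a 2-41-3 pattern
      exfalso
      push_neg at hmidall
      obtain ⟨w, hw1, hw2, hw3⟩ := hmidall
      have hww : L.getD w 0 < i + 1 := by
        have : L.getD w 0 ≠ i + 1 := fun he => by
          have := hinj w C (by omega) (by omega) (he.trans hCv.symm)
          omega
        omega
      have hex : ∃ q, P < q ∧ L.getD q 0 < i + 1 := ⟨w, hw1, hww⟩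
      obtain ⟨hq1a, hq1b⟩ := Nat.find_spec hex
      set q1 := Nat.find hex with hq1def
      have hq1w : q1 ≤ w := Nat.find_min' hex ⟨hw1, hww⟩
      have hq1C : q1 < C := by omega
      have hq1min : ∀ q, P < q → q < q1 → i + 1 < L.getD q 0 := by
        intro q h1 h2
        have h3 := Nat.find_min hex h2
        have h5 : ¬ L.getD q 0 < i + 1 := fun hlt => h3 ⟨h1, hlt⟩
        have h4 : L.getD q 0 ≠ i + 1 := fun he => by
          have := hinj q C (by omega) (by omega) (he.trans hCv.symm)
          omega
        omega
      have hq1P2 : P + 2 ≤ q1 := by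
        by_contra h
        have he : q1 = P + 1 := by omega
        rw [he] at hq1b
        omega
      have hq11 : i + 1 < L.getD (q1 - 1) 0 := hq1min (q1-1) (by omega) (by omega)
      have hq1i : L.getD q1 0 < i := by
        have h4 : L.getD q1 0 ≠ i := fun he => by
          have := hinj q1 P (by omega) (by omega) (he.trans hPv.symm)
          omega
        omega
      apply hbaxL P (q1 - 1) C (by omega) (by omega) (by omega)
      rw [show q1 - 1 + 1 = q1 by omega]
      exact ⟨by rw [hPv]; omega, by rw [hPv, hCv]; omega, by rw [hCv]; omega⟩
  · -- i+1 appears before i: find a 2-41-3 pattern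
    exfalso
    have hp0lt : p0 < i := by
      have : p0 ≠ i := fun he => by
        have := hinj Pp P (by omega) (by omega) (by rw [hPpv, hPv, he])
        omega
      omega
    have hex : ∃ q, C < q ∧ L.getD q 0 < i + 1 := ⟨P, hCltP, by rw [hPv]; omega⟩
    obtain ⟨hq0a, hq0b⟩ := Nat.find_spec hex
    set q0 := Nat.find hex with hq0def
    have hq0P : q0 ≤ P := Nat.find_min' hex ⟨hCltP, by rw [hPv]; omega⟩
    have hq0min : ∀ q, C < q → q < q0 → i + 1 < L.getD q 0 := by
      intro q h1 h2
      have h3 := Nat.find_min hex h2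
      have h5 : ¬ L.getD q 0 < i + 1 := fun hlt => h3 ⟨h1, hlt⟩
      have h4 : L.getD q 0 ≠ i + 1 := fun he => by
        have := hinj q C (by omega) (by omega) (he.trans hCv.symm)
        omega
      omega
    have hb : L.getD q0 0 < p0 := by
      rcases hf2 q0 hq0a (by omega) hq0b with h | ⟨q', h1, h2, h3⟩
      · exact h
      · have := hq0min q' h1 h2; omega
    have hq0P' : q0 < P := by
      have : q0 ≠ P := fun he => by rw [he, hPv] at hb; omega
      omega
    have hq0m1 : i < L.getD (q0 - 1) 0 := by
      rcases eq_or_lt_of_le (show C ≤ q0 - 1 by omega) with h | h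
      · rw [← h, hCv]; omega
      · have := hq0min (q0-1) h (by omega); omega
    apply hbaxL Pp (q0 - 1) P (by omega) (by omega) (by omega)
    rw [show q0 - 1 + 1 = q0 by omega]
    exact ⟨by rw [hPpv]; omega, by rw [hPpv, hPv]; omega, by rw [hPv]; omega⟩
end

section
/- Let π be a Baxter permutation of [n]. For any 1 ≤ i ≤ n−1, the node labeled i+1 in MinC(π) is a left child of its parent if and only if the node labeled i in MaxC(π) is a right child of its parent. Equivalently, with lr and lr' the left/right-child indicator sequences of the increasing traversal of MinC(π) and the decreasing traversal of MaxC(π) respectively, lr'[i] = l iff lr[n−i] = r. -/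
/-- IsMaxC S t holds iff t is the maximum Cartesian tree of the sequence S. -/
inductive IsMaxC : List ℕ → BTree → Prop where
  | leaf : IsMaxC [] .leaf
  | node : ∀ (l r : List ℕ) (x : ℕ) (tl tr : BTree),
      (∀ y ∈ l, y < x) → (∀ y ∈ r, y < x) →
      IsMaxC l tl → IsMaxC r tr → IsMaxC (l ++ x :: r) (.node tl x tr)

/-!
In a Cartesian tree, the node at position `k` is a left child iff it is the root of the left
subtree of some `j > k`, i.e. iff `k` holds the minimum of a window `[a, j)` whose right neighbour
`j` holds a smaller entry and whose left neighbour `a - 1`, if any, a smaller one still. Let `i` sit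
at position `p` and `i + 1` at position `q` of a Baxter permutation. If `q < p`, the first entry
after `q` below `i + 1` serves as the parent of `i + 1`, and a bad left neighbour of the window
would create a 2-41-3 pattern. If `p < q`, every window around `q` must start after `p`, and
`p, a - 1, a, j` would form a 3-14-2 pattern. So `i + 1` is a left child in MinC iff `q < p`.
Mirroring a tree swaps left and right children and reverses the sequence, so reversing both the
positions and the order turns the question about `i` in MaxC into the same one.
-/

theorem List.mem_iff_exists_getD {α : Type*} {l : List α} {d v : α} :
    v ∈ l ↔ ∃ i < l.length, l.getD i d = v := by
  rw [List.mem_iff_getElem]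
  exact exists_congr fun i => ⟨fun ⟨hi, h⟩ => ⟨hi, (l.getD_eq_getElem d hi).trans h⟩,
    fun ⟨hi, h⟩ => ⟨hi, (l.getD_eq_getElem d hi).symm.trans h⟩⟩

theorem List.forall_mem_iff_forall_getD {α : Type*} {l : List α} {d : α} {P : α → Prop} :
    (∀ y ∈ l, P y) ↔ ∀ k < l.length, P (l.getD k d) := by
  rw [List.forall_mem_iff_getElem]
  exact forall₂_congr fun k hk => by rw [l.getD_eq_getElem d hk]

theorem List.getD_append_cons_add {α : Type*} (l r : List α) (x d : α) (k : ℕ) :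
    (l ++ x :: r).getD (k + (l.length + 1)) d = r.getD k d := by
  rw [List.getD_append_right _ _ _ _ (by omega),
    show k + (l.length + 1) - l.length = k + 1 by omega, List.getD_cons_succ]

theorem exists_first_after {P : ℕ → Prop} {q p : ℕ} (hqp : q < p) (hp : P p) :
    ∃ j, q < j ∧ j ≤ p ∧ P j ∧ ∀ k, q < k → k < j → ¬ P k := by
  classical
  have h : ∃ j, q < j ∧ P j := ⟨p, hqp, hp⟩
  obtain ⟨hqj, hj⟩ := Nat.find_spec h
  exact ⟨Nat.find h, hqj, Nat.find_min' h ⟨hqp, hp⟩, hj,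
    fun k hqk hkj hk => Nat.find_min h hkj ⟨hqk, hk⟩⟩

theorem exists_maximal_run_before (P : ℕ → Prop) (q : ℕ) :
    ∃ a ≤ q, (a = 0 ∨ P (a - 1)) ∧ ∀ k, a ≤ k → k < q → ¬ P k := by
  induction q with
  | zero => exact ⟨0, le_rfl, .inl rfl, fun k hk hk0 => absurd hk0 (by omega)⟩
  | succ q ih =>
    by_cases hq : P q
    · exact ⟨q + 1, le_rfl, .inr hq, fun k hk hkq => absurd hkq (by omega)⟩
    · obtain ⟨a, haq, ha, hrun⟩ := ih
      refine ⟨a, by omega, ha, fun k hak hkq => ?_⟩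
      rcases Nat.lt_succ_iff_lt_or_eq.mp hkq with hkq | rfl
      exacts [hrun k hak hkq, hq]

section LeftChild

variable {α : Type*} {lt : α → α → Prop} {n m i : ℕ} {f : ℕ → α}

/-- In the Cartesian tree of `f 0, …, f (n - 1)` with respect to `lt` (smaller labels nearer the
root), the node at position `i` is a left child: its parent sits at `j`, and `[a, j)` is the
parent's left subtree, of which `i` is the root. -/
def IsLeftChildAt (lt : α → α → Prop) (n : ℕ) (f : ℕ → α) (i : ℕ) : Prop :=
  ∃ a j, a ≤ i ∧ i < j ∧ j < n ∧ lt (f j) (f i) ∧ (a = 0 ∨ lt (f (a - 1)) (f j)) ∧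
    ∀ k, a ≤ k → k < j → ¬ lt (f k) (f i)

theorem IsLeftChildAt.of_eqOn {g : ℕ → α} (h : ∀ k < n, f k = g k)
    (hf : IsLeftChildAt lt n f i) : IsLeftChildAt lt n g i := by
  obtain ⟨a, j, hai, hij, hjn, hji, ha, hk⟩ := hf
  refine ⟨a, j, hai, hij, hjn, ?_, ?_, fun k hak hkj => ?_⟩
  · rwa [← h i (by omega), ← h j hjn]
  · rwa [← h (a - 1) (by omega), ← h j hjn]
  · rw [← h k (by omega), ← h i (by omega)]
    exact hk k hak hkj

theorem isLeftChildAt_congr {g : ℕ → α} (h : ∀ k < n, f k = g k) :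
    IsLeftChildAt lt n f i ↔ IsLeftChildAt lt n g i :=
  ⟨.of_eqOn h, .of_eqOn fun k hk => (h k hk).symm⟩

theorem isLeftChildAt_add_iff_of_min {M : ℕ}
    (hmin : ∀ k < m + 1 + M, k ≠ m → lt (f m) (f k)) :
    IsLeftChildAt lt (m + 1 + M) f (i + (m + 1)) ↔
      IsLeftChildAt lt M (fun k => f (k + (m + 1))) i := by
  constructor
  · rintro ⟨a, j, hai, hij, hjn, hji, ha, hk⟩
    have hma : m < a := by
      by_contra! ham
      exact hk m ham (by omega) (hmin _ (by omega) (by omega))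
    obtain ⟨a, rfl⟩ : ∃ a', a = a' + (m + 1) := ⟨a - (m + 1), by omega⟩
    obtain ⟨j, rfl⟩ : ∃ j', j = j' + (m + 1) := ⟨j - (m + 1), by omega⟩
    refine ⟨a, j, by omega, by omega, by omega, hji, ?_,
      fun k hak hkj => hk _ (by omega) (by omega)⟩
    rcases Nat.eq_zero_or_pos a with rfl | ha0
    · exact .inl rfl
    · refine .inr ?_
      have ha := ha.resolve_left (by omega)
      rwa [show a + (m + 1) - 1 = a - 1 + (m + 1) by omega] at ha
  · rintro ⟨a, j, hai, hij, hjn, hji, ha, hk⟩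
    refine ⟨a + (m + 1), j + (m + 1), ?_, ?_, ?_, hji, .inr ?_, fun k hak hkj => ?_⟩
    · omega
    · omega
    · omega
    · rcases Nat.eq_zero_or_pos a with rfl | ha0
      · simpa using hmin (j + (m + 1)) (by omega) (by omega)
      · rw [show a + (m + 1) - 1 = a - 1 + (m + 1) by omega]
        exact ha.resolve_left (by omega)
    · obtain ⟨k, rfl⟩ : ∃ k', k = k' + (m + 1) := ⟨k - (m + 1), by omega⟩
      exact hk k (by omega) (by omega)

variable [Std.Asymm lt]

theorem not_isLeftChildAt_of_min (hmin : ∀ k < n, k ≠ m → lt (f m) (f k)) :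
    ¬ IsLeftChildAt lt n f m := by
  rintro ⟨a, j, -, hmj, hjn, hjm, -, -⟩
  exact Std.Asymm.asymm _ _ hjm (hmin j hjn (by omega))

theorem isLeftChildAt_iff_of_lt_min (hmn : m < n) (hmin : ∀ k < n, k ≠ m → lt (f m) (f k))
    (him : i < m) :
    IsLeftChildAt lt n f i ↔ (∀ k < m, ¬ lt (f k) (f i)) ∨ IsLeftChildAt lt m f i := by
  constructor
  · rintro ⟨a, j, hai, hij, hjn, hji, ha, hk⟩
    rcases lt_trichotomy j m with hjm | rfl | hmj
    · exact .inr ⟨a, j, hai, hij, hjm, hji, ha, hk⟩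
    · obtain rfl : a = 0 :=
        ha.resolve_right fun h => Std.Asymm.asymm _ _ h (hmin _ (by omega) (by omega))
      exact .inl fun k hkj => hk k k.zero_le hkj
    · exact absurd (hmin i (by omega) (by omega)) (hk m (by omega) hmj)
  · rintro (hroot | ⟨a, j, hai, hij, hjm, hji, ha, hk⟩)
    · exact ⟨0, m, i.zero_le, him, hmn, hmin i (by omega) (by omega), .inl rfl,
        fun k _ hk => hroot k hk⟩
    · exact ⟨a, j, hai, hij, by omega, hji, ha, hk⟩

end LeftChild

section LeftChildList

variable {lt : ℕ → ℕ → Prop} {S l r : List ℕ} {x v : ℕ}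

def IsLeftChild (lt : ℕ → ℕ → Prop) (S : List ℕ) (v : ℕ) : Prop :=
  ∃ i < S.length, S.getD i 0 = v ∧ IsLeftChildAt lt S.length (S.getD · 0) i

theorem isLeftChild_append_cons [Std.Asymm lt] (hl : ∀ y ∈ l, lt x y)
    (hr : ∀ y ∈ r, lt x y) :
    IsLeftChild lt (l ++ x :: r) v ↔
      (v ∈ l ∧ ∀ y ∈ l, ¬ lt y v) ∨ IsLeftChild lt l v ∨ IsLeftChild lt r v := by
  set f : ℕ → ℕ := ((l ++ x :: r).getD · 0)
  set m := l.length
  have hlen : (l ++ x :: r).length = m + 1 + r.length := by simp [m]; omega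
  have hfl : ∀ k < m, f k = l.getD k 0 := fun k hk => List.getD_append _ _ _ _ hk
  have hfm : f m = x := by simp [f, m]
  have hfr : ∀ k, f (k + (m + 1)) = r.getD k 0 := fun k => List.getD_append_cons_add l r x 0 k
  have hmin : ∀ k < m + 1 + r.length, k ≠ m → lt (f m) (f k) := by
    intro k hk hkm
    rw [hfm]
    rcases Nat.lt_or_gt_of_ne hkm with hkm | hkm
    · exact hfl k hkm ▸ hl _ (List.mem_iff_exists_getD.mpr ⟨k, hkm, rfl⟩)
    · obtain ⟨k, rfl⟩ : ∃ k', k = k' + (m + 1) := ⟨k - (m + 1), by omega⟩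
      exact hfr k ▸ hr _ (List.mem_iff_exists_getD.mpr ⟨k, by omega, rfl⟩)
  have hroot : ∀ i < m, (∀ k < m, ¬ lt (f k) (f i)) ↔ ∀ y ∈ l, ¬ lt y (f i) := by
    intro i _
    rw [List.forall_mem_iff_forall_getD (d := 0)]
    exact forall₂_congr fun k hk => by rw [hfl k hk]
  unfold IsLeftChild
  rw [hlen]
  constructor
  · rintro ⟨i, hi, rfl, hchild⟩
    rcases lt_trichotomy i m with him | rfl | hmi
    · rw [isLeftChildAt_iff_of_lt_min (by omega) hmin him, hroot i him] at hchild
      rcases hchild with hchild | hchild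
      · refine .inl ⟨?_, hchild⟩
        rw [show (l ++ x :: r).getD i 0 = l.getD i 0 from hfl i him]
        exact List.mem_iff_exists_getD.mpr ⟨i, him, rfl⟩
      · exact .inr (.inl ⟨i, him, (hfl i him).symm, (isLeftChildAt_congr hfl).mp hchild⟩)
    · exact absurd hchild (not_isLeftChildAt_of_min hmin)
    · obtain ⟨i, rfl⟩ : ∃ i', i = i' + (m + 1) := ⟨i - (m + 1), by omega⟩
      rw [isLeftChildAt_add_iff_of_min hmin, isLeftChildAt_congr fun k _ => hfr k] at hchild
      exact .inr (.inr ⟨i, by omega, (hfr i).symm, hchild⟩)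
  · rintro (⟨hvl, hvmin⟩ | ⟨i, him, rfl, hchild⟩ | ⟨i, hir, rfl, hchild⟩)
    · obtain ⟨i, him, rfl⟩ := List.mem_iff_exists_getD (d := 0).mp hvl
      refine ⟨i, by omega, hfl i him, ?_⟩
      rw [isLeftChildAt_iff_of_lt_min (by omega) hmin him, hroot i him, hfl i him]
      exact .inl hvmin
    · refine ⟨i, by omega, hfl i him, ?_⟩
      rw [isLeftChildAt_iff_of_lt_min (by omega) hmin him, isLeftChildAt_congr hfl]
      exact .inr hchild
    · refine ⟨i + (m + 1), by omega, hfr i, ?_⟩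
      rw [isLeftChildAt_add_iff_of_min hmin, isLeftChildAt_congr fun k _ => hfr k]
      exact hchild

theorem isLeftChild_iff_isLeftChildAt {n q : ℕ} {f : ℕ → ℕ}
    (hlen : S.length = n) (hS : ∀ k < n, S.getD k 0 = f k) (hinj : Set.InjOn f (Set.Iio n))
    (hq : q < n) (hv : f q = v) :
    IsLeftChild lt S v ↔ IsLeftChildAt lt n f q := by
  subst hlen hv
  constructor
  · rintro ⟨i, hi, hiq, h⟩
    obtain rfl : i = q := hinj hi hq ((hS i hi).symm.trans hiq)
    exact (isLeftChildAt_congr hS).mp h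
  · exact fun h => ⟨q, hq, hS q hq, (isLeftChildAt_congr hS).mpr h⟩

end LeftChildList

inductive IsCartesian (lt : ℕ → ℕ → Prop) : List ℕ → BTree → Prop where
  | leaf : IsCartesian lt [] .leaf
  | node (l r : List ℕ) (x : ℕ) (tl tr : BTree) :
      (∀ y ∈ l, lt x y) → (∀ y ∈ r, lt x y) →
      IsCartesian lt l tl → IsCartesian lt r tr → IsCartesian lt (l ++ x :: r) (.node tl x tr)

def BTree.mirror : BTree → BTree
  | .leaf => .leaf
  | .node l x r => .node r.mirror x l.mirror

theorem BTree.rootLabel_mirror (t : BTree) : t.mirror.rootLabel = t.rootLabel := by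
  cases t <;> rfl

theorem leftChildRel_mirror (t : BTree) (p c : ℕ) :
    leftChildRel t.mirror p c ↔ rightChildRel t p c := by
  induction t with
  | leaf => exact Iff.rfl
  | node l x r ihl ihr =>
    simp only [BTree.mirror, leftChildRel, rightChildRel, BTree.rootLabel_mirror, ihl, ihr]
    tauto

section Cartesian

variable {lt : ℕ → ℕ → Prop} {S : List ℕ} {t : BTree}

theorem IsMinC.isCartesian (h : IsMinC S t) : IsCartesian (· < ·) S t := by
  induction h with
  | leaf => exact .leaf
  | node l r x tl tr hl hr _ _ ihl ihr => exact .node l r x tl tr hl hr ihl ihr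

theorem IsMaxC.isCartesian (h : IsMaxC S t) : IsCartesian (· > ·) S t := by
  induction h with
  | leaf => exact .leaf
  | node l r x tl tr hl hr _ _ ihl ihr => exact .node l r x tl tr hl hr ihl ihr

theorem IsCartesian.mirror (h : IsCartesian lt S t) : IsCartesian lt S.reverse t.mirror := by
  induction h with
  | leaf => exact .leaf
  | node l r x tl tr hl hr _ _ ihl ihr =>
    simpa [BTree.mirror] using
      IsCartesian.node _ _ x _ _ (by simpa using hr) (by simpa using hl) ihr ihl

variable [Std.Asymm lt]

theorem IsCartesian.rootLabel_eq_some_iff (h : IsCartesian lt S t) {v : ℕ} :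
    t.rootLabel = some v ↔ v ∈ S ∧ ∀ y ∈ S, ¬ lt y v := by
  cases h with
  | leaf => simp [BTree.rootLabel]
  | node l r x tl tr hl hr =>
    have hbelow : ∀ y ∈ l ++ x :: r, y ≠ x → lt x y := by
      intro y hy hyx
      rcases List.mem_append.mp hy with hy | hy
      · exact hl y hy
      · exact hr y ((List.mem_cons.mp hy).resolve_left hyx)
    simp only [BTree.rootLabel, Option.some.injEq]
    constructor
    · rintro rfl
      refine ⟨by simp, fun y hy hyx => ?_⟩
      by_cases hxy : y = x
      · exact Std.Irrefl.irrefl x (hxy ▸ hyx)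
      · exact Std.Asymm.asymm _ _ (hbelow y hy hxy) hyx
    · rintro ⟨hv, hvmin⟩
      by_contra hxv
      exact hvmin x (by simp) (hbelow v hv (Ne.symm hxv))

theorem IsCartesian.exists_leftChildRel_iff (h : IsCartesian lt S t) (v : ℕ) :
    (∃ p, leftChildRel t p v) ↔ IsLeftChild lt S v := by
  induction h with
  | leaf => simp [leftChildRel, IsLeftChild]
  | node l r x tl tr hl hr hcl _ ihl ihr =>
    rw [isLeftChild_append_cons hl hr, ← ihl, ← ihr, ← hcl.rootLabel_eq_some_iff]
    simp only [leftChildRel, exists_or, exists_eq_left']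

end Cartesian

theorem IsMinC.exists_leftChildRel_iff {S : List ℕ} {t : BTree} (h : IsMinC S t) (v : ℕ) :
    (∃ p, leftChildRel t p v) ↔ IsLeftChild (· < ·) S v :=
  h.isCartesian.exists_leftChildRel_iff v

theorem IsMaxC.exists_rightChildRel_iff {S : List ℕ} {t : BTree} (h : IsMaxC S t) (v : ℕ) :
    (∃ p, rightChildRel t p v) ↔ IsLeftChild (· > ·) S.reverse v := by
  simp only [← leftChildRel_mirror]
  exact h.isCartesian.mirror.exists_leftChildRel_iff v

def IsBaxterSeq {α : Type*} [LT α] (n : ℕ) (f : ℕ → α) : Prop :=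
  ∀ i j k, i < j → j < k → k < n →
    ¬(f (j + 1) < f i ∧ f i < f k ∧ f k < f j) ∧
    ¬(f j < f k ∧ f k < f i ∧ f i < f (j + 1))

theorem IsBaxter.isBaxterSeq {n : ℕ} {π : ℕ → ℕ} (h : IsBaxter n π) :
    IsBaxterSeq n (fun k => π (k + 1)) :=
  fun i j k hij hjk hkn => h (i + 1) (j + 1) (k + 1) (by omega) (by omega) (by omega) (by omega)

section Baxter

variable {α : Type*} [LinearOrder α] {n : ℕ} {f : ℕ → α}

theorem IsBaxterSeq.reverse_toDual (hf : IsBaxterSeq n f) :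
    IsBaxterSeq n (fun k => OrderDual.toDual (f (n - 1 - k))) := by
  intro i j k hij hjk hkn
  rcases Nat.lt_or_ge (j + 1) k with hjk | hjk
  · obtain ⟨h₁, h₂⟩ :=
      hf (n - 1 - k) (n - 1 - (j + 1)) (n - 1 - i) (by omega) (by omega) (by omega)
    rw [show n - 1 - (j + 1) + 1 = n - 1 - j by omega] at h₁ h₂
    exact ⟨fun ⟨a, b, c⟩ => h₁ ⟨c, b, a⟩, fun ⟨a, b, c⟩ => h₂ ⟨c, b, a⟩⟩
  · obtain rfl : k = j + 1 := by omega
    exact ⟨fun ⟨a, b, _⟩ => (a.trans b).false, fun ⟨_, b, c⟩ => (b.trans c).false⟩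

theorem IsBaxterSeq.isLeftChildAt_iff (hf : IsBaxterSeq n f) (hinj : Set.InjOn f (Set.Iio n))
    {p q : ℕ} (hp : p < n) (hq : q < n) (hpq : f p < f q)
    (hadj : ∀ k < n, f k < f q → f k ≤ f p) :
    IsLeftChildAt (· < ·) n f q ↔ q < p := by
  have hne : ∀ k < n, k ≠ p → f k ≠ f p := fun k hk hkp h => hkp (hinj hk hp h)
  constructor
  · rintro ⟨a, j, haq, hqj, hjn, hjq, ha, hk⟩
    by_contra! hpq'
    have hpa : p < a := by
      by_contra! hap
      exact hk p hap (by omega) hpq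
    have hjp : f j < f p := lt_of_le_of_ne (hadj j hjn hjq) (hne j hjn (by omega))
    have ha1 : f (a - 1) < f j := ha.resolve_left (by omega)
    have hpa1 : p < a - 1 := by
      rcases Nat.lt_or_ge p (a - 1) with h | h
      · exact h
      · obtain rfl : p = a - 1 := by omega
        exact absurd (ha1.trans hjp) (lt_irrefl _)
    have hqa : f q ≤ f a := not_lt.mp (hk a le_rfl (by omega))
    -- `p, a - 1, a, j` is a 3-14-2 pattern
    refine (hf p (a - 1) j hpa1 (by omega) hjn).2 ⟨ha1, hjp, ?_⟩
    rw [show a - 1 + 1 = a by omega]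
    exact hpq.trans_le hqa
  · intro hqp
    obtain ⟨j, hqj, hjp, hjq, hfirst⟩ := exists_first_after (P := (f · < f q)) hqp hpq
    obtain ⟨a, haq, ha, hrun⟩ := exists_maximal_run_before (f · < f q) q
    refine ⟨a, j, haq, hqj, by omega, hjq, ?_, fun k hak hkj => ?_⟩
    · rcases Nat.eq_zero_or_pos a with ha0 | ha0
      · exact .inl ha0
      refine .inr ?_
      have ha := ha.resolve_left (by omega)
      by_contra! hja
      have hja : f j < f (a - 1) := lt_of_le_of_ne hja fun h => by
        have := hinj (by simp; omega) (by simp; omega) h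
        omega
      have hap : f (a - 1) < f p :=
        lt_of_le_of_ne (hadj _ (by omega) ha) (hne _ (by omega) (by omega))
      have hjp : j < p := lt_of_le_of_ne hjp fun h => by subst h; exact (hja.trans hap).false
      -- `a - 1, j - 1, j, p` is a 2-41-3 pattern
      refine (hf (a - 1) (j - 1) p (by omega) (by omega) hp).1 ⟨?_, hap, ?_⟩
      · rwa [show j - 1 + 1 = j by omega]
      · rcases Nat.lt_or_ge q (j - 1) with hqj' | hqj'
        · exact hpq.trans_le (not_lt.mp (hfirst _ hqj' (by omega)))
        · rwa [show j - 1 = q by omega]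
    · rcases lt_trichotomy k q with hkq | rfl | hqk
      exacts [hrun k hak hkq, lt_irrefl _, hfirst k hqk hkj]

end Baxter

section Permutation

variable {n : ℕ} {π : ℕ → ℕ}

theorem length_permList : (permList n π).length = n := by
  simp [permList]

theorem permList_getD {k : ℕ} (hk : k < n) : (permList n π).getD k 0 = π (k + 1) := by
  simp [permList, List.getD_eq_getElem?_getD, hk]

theorem permList_reverse_getD {k : ℕ} (hk : k < n) :
    (permList n π).reverse.getD k 0 = π (n - 1 - k + 1) := by
  rw [List.getD_reverse _ (by rwa [length_permList]), length_permList, permList_getD (by omega)]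

theorem IsPermOn.injOn_succ (h : IsPermOn n π) : Set.InjOn (fun k => π (k + 1)) (Set.Iio n) :=
  fun a ha b hb hab => by
    have := h.injOn (⟨by omega, ha⟩ : a + 1 ∈ Set.Icc 1 n) ⟨by omega, hb⟩ hab
    omega

variable {i p q : ℕ}

theorem isLeftChild_permList_iff (hbax : IsBaxter n π) (hperm : IsPermOn n π)
    (hp : p ∈ Set.Icc 1 n) (hq : q ∈ Set.Icc 1 n) (hpi : π p = i) (hqi : π q = i + 1) :
    IsLeftChild (· < ·) (permList n π) (i + 1) ↔ q < p := by
  obtain ⟨hp1, hpn⟩ := hp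
  obtain ⟨hq1, hqn⟩ := hq
  have hπ : ∀ k, 1 ≤ k → π (k - 1 + 1) = π k := fun k hk => by rw [Nat.sub_add_cancel hk]
  rw [isLeftChild_iff_isLeftChildAt length_permList (fun k hk => permList_getD hk)
      hperm.injOn_succ (q := q - 1) (by omega) ((hπ q hq1).trans hqi),
    hbax.isBaxterSeq.isLeftChildAt_iff hperm.injOn_succ (p := p - 1) (by omega) (by omega)
      (by simp only [hπ p hp1, hπ q hq1, hpi, hqi]; omega)
      (fun k _ hk => by simp only [hπ p hp1, hπ q hq1, hpi, hqi] at hk ⊢; omega)]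
  omega

theorem isLeftChild_reverse_permList_iff (hbax : IsBaxter n π) (hperm : IsPermOn n π)
    (hp : p ∈ Set.Icc 1 n) (hq : q ∈ Set.Icc 1 n) (hpi : π p = i) (hqi : π q = i + 1) :
    IsLeftChild (· > ·) (permList n π).reverse i ↔ q < p := by
  obtain ⟨hp1, hpn⟩ := hp
  obtain ⟨hq1, hqn⟩ := hq
  have hrev : ∀ k, 1 ≤ k → k ≤ n → π (n - 1 - (n - k) + 1) = π k := fun k hk1 hkn => by
    rw [show n - 1 - (n - k) + 1 = k by omega]
  have hinj : Set.InjOn (fun k => π (n - 1 - k + 1)) (Set.Iio n) := fun a ha b hb hab => by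
    have := hperm.injOn_succ (show n - 1 - a < n by omega) (show n - 1 - b < n by omega) hab
    simp only [Set.mem_Iio] at ha hb
    omega
  rw [isLeftChild_iff_isLeftChildAt (by simp [length_permList])
      (fun k hk => permList_reverse_getD hk) hinj (q := n - p) (by omega)
      ((hrev p hp1 hpn).trans hpi)]
  -- `(· > ·)` on `ℕ` is `(· < ·)` on `ℕᵒᵈ`
  change IsLeftChildAt (α := ℕᵒᵈ) (· < ·) n (fun k => OrderDual.toDual (π (n - 1 - k + 1)))
    (n - p) ↔ q < p
  rw [hbax.isBaxterSeq.reverse_toDual.isLeftChildAt_iff hinj (p := n - q) (by omega) (by omega)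
      (by simp only [hrev p hp1 hpn, hrev q hq1 hqn, hpi, hqi, OrderDual.toDual_lt_toDual]; omega)
      (fun k _ hk => by
        simp only [hrev p hp1 hpn, hrev q hq1 hqn, hpi, hqi, OrderDual.toDual_lt_toDual,
          OrderDual.toDual_le_toDual] at hk ⊢
        omega)]
  omega

end Permutation

/-- For a Baxter permutation π, the node labeled i+1 in MinC(π) is a left child
of its parent iff the node labeled i in MaxC(π) is a right child of its parent. -/
theorem stmt10 (n : ℕ) (π : ℕ → ℕ) (tmin tmax : BTree) (i : ℕ)
    (hbax : IsBaxter n π) (hperm : IsPermOn n π)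
    (hmin : IsMinC (permList n π) tmin)
    (hmax : IsMaxC (permList n π) tmax)
    (hi1 : 1 ≤ i) (hi2 : i ≤ n - 1) :
    (∃ p, leftChildRel tmin p (i + 1)) ↔ (∃ p, rightChildRel tmax p i) := by
  obtain ⟨p, hp, hpi⟩ := hperm.surjOn (⟨hi1, by omega⟩ : i ∈ Set.Icc 1 n)
  obtain ⟨q, hq, hqi⟩ := hperm.surjOn (⟨by omega, by omega⟩ : i + 1 ∈ Set.Icc 1 n)
  rw [hmin.exists_leftChildRel_iff, hmax.exists_rightChildRel_iff,
    isLeftChild_permList_iff hbax hperm hp hq hpi hqi,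
    isLeftChild_reverse_permList_iff hbax hperm hp hq hpi hqi]
end

section
/- A permutation π of [n] with n ≥ 1 is separable if and only if n = 1, or π can be written as a direct sum or a skew sum of two nonempty separable permutations. (Direct sum: there is 1 ≤ k < n such that π maps [1,k] onto [1,k] and the restrictions to [1,k] and [k+1,n] are order-isomorphic to separable permutations; skew sum: there is 1 ≤ k < n such that π maps [1,k] onto [n−k+1,n] and both restricted patterns are separable.) -/
open Set

/-- On the positions in `s`, `f` splits after `k`; `r = (· < ·)` is a direct sum and
`r = (· > ·)` a skew sum. -/
def IsCut (r : ℕ → ℕ → Prop) (s : Set ℕ) (f : ℕ → ℕ) (k : ℕ) : Prop :=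
  ∀ i ∈ s, ∀ j ∈ s, i ≤ k → k < j → r (f i) (f j)

theorem IsSeparablePerm.comp {n m : ℕ} {f e : ℕ → ℕ} (hsep : IsSeparablePerm n f)
    (he : StrictMono e) (hmaps : MapsTo e (Icc 1 m) (Icc 1 n)) :
    IsSeparablePerm m (f ∘ e) := fun i1 i2 i3 i4 h1 h12 h23 h34 h4 =>
  hsep (e i1) (e i2) (e i3) (e i4) (hmaps ⟨h1, by omega⟩).1 (he h12) (he h23) (he h34)
    (hmaps ⟨by omega, h4⟩).2

theorem IsSeparablePerm.of_le {n k : ℕ} {f : ℕ → ℕ} (hsep : IsSeparablePerm n f) (hk : k ≤ n) :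
    IsSeparablePerm k f :=
  hsep.comp strictMono_id fun _ hi => ⟨hi.1, hi.2.trans hk⟩

theorem IsSeparablePerm.shift {n : ℕ} {f : ℕ → ℕ} (hsep : IsSeparablePerm n f) (k : ℕ) :
    IsSeparablePerm (n - k) (fun j => f (k + j)) :=
  hsep.comp (strictMono_id.const_add k) fun _ ⟨h1, h2⟩ => ⟨by omega, by omega⟩

theorem isSeparablePerm_sub_iff {n c : ℕ} {f : ℕ → ℕ} (hf : ∀ i ∈ Icc 1 n, c ≤ f i) :
    IsSeparablePerm n (fun i => f i - c) ↔ IsSeparablePerm n f := by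
  refine forall₄_congr fun i1 i2 i3 i4 => ?_
  constructor <;>
  · intro h h1 h12 h23 h34 h4
    have := h h1 h12 h23 h34 h4
    beta_reduce at *
    have := hf i1 ⟨h1, by omega⟩
    have := hf i2 ⟨by omega, by omega⟩
    have := hf i3 ⟨by omega, by omega⟩
    have := hf i4 ⟨by omega, h4⟩
    omega

theorem IsSeparablePerm.of_isCut {n k : ℕ} {f : ℕ → ℕ}
    (hcut : IsCut (· < ·) (Icc 1 n) f k ∨ IsCut (· > ·) (Icc 1 n) f k)
    (hleft : IsSeparablePerm k f) (hright : IsSeparablePerm (n - k) (fun j => f (k + j))) :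
    IsSeparablePerm n f := by
  intro i1 i2 i3 i4 h1 h12 h23 h34 h4
  rcases le_or_gt i4 k with hk4 | hk4
  · exact hleft i1 i2 i3 i4 h1 h12 h23 h34 hk4
  rcases le_or_gt i1 k with hk1 | hk1
  · rcases hcut with hc | hc <;>
    · have := hc i1 ⟨h1, by omega⟩ i2 ⟨by omega, by omega⟩ hk1
      have := hc i1 ⟨h1, by omega⟩ i3 ⟨by omega, by omega⟩ hk1
      have := hc i1 ⟨h1, by omega⟩ i4 ⟨by omega, h4⟩ hk1 hk4
      have := hc i2 ⟨by omega, by omega⟩ i3 ⟨by omega, by omega⟩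
      have := hc i2 ⟨by omega, by omega⟩ i4 ⟨by omega, h4⟩
      have := hc i3 ⟨by omega, by omega⟩ i4 ⟨by omega, h4⟩
      omega
  · have := hright (i1 - k) (i2 - k) (i3 - k) (i4 - k) (by omega) (by omega) (by omega) (by omega)
      (by omega)
    simpa only [Nat.add_sub_cancel' hk1.le, Nat.add_sub_cancel' (by omega : k ≤ i2),
      Nat.add_sub_cancel' (by omega : k ≤ i3), Nat.add_sub_cancel' hk4.le] using this

def IsDecomposable (n : ℕ) (f : ℕ → ℕ) : Prop :=
  ∃ k, 1 ≤ k ∧ k < n ∧ (IsCut (· < ·) (Icc 1 n) f k ∨ IsCut (· > ·) (Icc 1 n) f k)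

/-- The `j`-th position of `ℕ \ {p}`, the analogue of `Fin.succAbove`. -/
def Nat.succAbove (p j : ℕ) : ℕ := if j < p then j else j + 1

theorem Nat.succAbove_strictMono (p : ℕ) : StrictMono (Nat.succAbove p) := by
  intro a b h
  unfold Nat.succAbove
  split_ifs <;> omega

theorem Nat.bijOn_succAbove {n p : ℕ} (hp : p ∈ Icc 1 (n + 1)) :
    BijOn (Nat.succAbove p) (Icc 1 n) (Icc 1 (n + 1) \ {p}) := by
  refine ⟨fun j hj => ?_, (Nat.succAbove_strictMono p).injective.injOn, fun i hi => ?_⟩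
  · obtain ⟨h1, h2⟩ := hj
    unfold Nat.succAbove
    split_ifs <;> exact ⟨⟨by omega, by omega⟩, by simp; omega⟩
  · obtain ⟨⟨h1, h2⟩, hip⟩ := hi
    simp only [mem_singleton_iff] at hip
    obtain ⟨hp1, hp2⟩ := hp
    rcases lt_or_gt_of_ne hip with h | h
    · exact ⟨i, ⟨h1, by omega⟩, if_pos h⟩
    · exact ⟨i - 1, ⟨by omega, by omega⟩, by rw [Nat.succAbove, if_neg (by omega)]; omega⟩

theorem IsCut.of_comp {r : ℕ → ℕ → Prop} {s t : Set ℕ} {f e : ℕ → ℕ} {k : ℕ}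
    (he : StrictMono e) (hst : SurjOn e s t) (h : IsCut r s (f ∘ e) k) : IsCut r t f (e k) := by
  intro i hi j hj hik hkj
  obtain ⟨i', hi', rfl⟩ := hst hi
  obtain ⟨j', hj', rfl⟩ := hst hj
  exact h i' hi' j' hj' (he.le_iff_le.1 hik) (he.lt_iff_lt.1 hkj)

theorem isDecomposable_of_isCut_lt_sdiff_max {n p c a b : ℕ} {f : ℕ → ℕ}
    (hsep : IsSeparablePerm n f) (hinj : InjOn f (Icc 1 n)) (hp : p ∈ Icc 1 n)
    (hmax : ∀ i ∈ Icc 1 n \ {p}, f i < f p) (hcut : IsCut (· < ·) (Icc 1 n \ {p}) f c)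
    (ha : a ∈ Icc 1 n \ {p}) (hac : a ≤ c) (hb : b ∈ Icc 1 n \ {p}) (hcb : c < b) :
    IsDecomposable n f := by
  obtain ⟨hp1, hpn⟩ := hp
  obtain ⟨⟨ha1, -⟩, -⟩ := ha
  obtain ⟨⟨-, hbn⟩, hbp⟩ := hb
  simp only [mem_singleton_iff] at hbp
  rcases lt_or_ge c p with hcp | hpc
  · refine ⟨c, by omega, by omega, .inl fun i hi j hj hic hcj => ?_⟩
    rcases eq_or_ne j p with rfl | hjp
    · exact hmax i ⟨hi, by simp; omega⟩
    · exact hcut i ⟨hi, by simp; omega⟩ j ⟨hj, hjp⟩ hic hcj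
  rcases eq_or_ne p 1 with rfl | hp1'
  · refine ⟨1, le_rfl, by omega, .inr fun i hi j hj hi1 h1j => ?_⟩
    obtain rfl : i = 1 := by have := hi.1; omega
    exact hmax j ⟨hj, by simp; omega⟩
  -- the values before `p` stay below those after `p` inside the first block: else 2413
  refine ⟨p - 1, by omega, by omega, .inl fun i hi j hj hip hpj => ?_⟩
  have hip' : i ∈ Icc 1 n \ {p} := ⟨hi, by simp; omega⟩
  rcases eq_or_ne j p with rfl | hjp
  · exact hmax i hip'
  rcases le_or_gt j c with hjc | hcj
  · have hib : f i < f b := hcut i hip' b ⟨⟨by omega, hbn⟩, hbp⟩ (by omega) hcb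
    have hbp' : f b < f p := hmax b ⟨⟨by omega, hbn⟩, hbp⟩
    have hij : f i ≠ f j := hinj.ne hi hj (by omega)
    have := (hsep i p j b hi.1 (by omega) (by omega) (by omega) hbn).1
    omega
  · exact hcut i hip' j ⟨hj, hjp⟩ (by omega) hcj

theorem isDecomposable_of_isCut_gt_sdiff_max {n p c a b : ℕ} {f : ℕ → ℕ}
    (hsep : IsSeparablePerm n f) (hinj : InjOn f (Icc 1 n)) (hp : p ∈ Icc 1 n)
    (hmax : ∀ i ∈ Icc 1 n \ {p}, f i < f p) (hcut : IsCut (· > ·) (Icc 1 n \ {p}) f c)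
    (ha : a ∈ Icc 1 n \ {p}) (hac : a ≤ c) (hb : b ∈ Icc 1 n \ {p}) (hcb : c < b) :
    IsDecomposable n f := by
  obtain ⟨hp1, hpn⟩ := hp
  obtain ⟨⟨ha1, han⟩, hap⟩ := ha
  obtain ⟨⟨-, hbn⟩, -⟩ := hb
  simp only [mem_singleton_iff] at hap
  rcases le_or_gt p c with hpc | hcp
  · refine ⟨c, by omega, by omega, .inr fun i hi j hj hic hcj => ?_⟩
    have hj' : j ∈ Icc 1 n \ {p} := ⟨hj, by simp; omega⟩
    rcases eq_or_ne i p with rfl | hip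
    · exact hmax j hj'
    · exact hcut i ⟨hi, hip⟩ j hj' hic hcj
  rcases eq_or_ne p n with rfl | hpn'
  · refine ⟨p - 1, by omega, by omega, .inl fun i hi j hj hi1 h1j => ?_⟩
    obtain rfl : j = p := by have := hj.2; omega
    exact hmax i ⟨hi, by simp; omega⟩
  -- the values after `c` and before `p` stay above those after `p`: else 3142
  refine ⟨p, hp1, by omega, .inr fun i hi j hj hip hpj => ?_⟩
  have hj' : j ∈ Icc 1 n \ {p} := ⟨hj, by simp; omega⟩
  rcases eq_or_ne i p with rfl | hip'
  · exact hmax j hj'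
  rcases le_or_gt i c with hic | hci
  · exact hcut i ⟨hi, hip'⟩ j hj' hic (by omega)
  · have haj : f j < f a := hcut a ⟨⟨ha1, han⟩, hap⟩ j hj' hac (by omega)
    have hap' : f a < f p := hmax a ⟨⟨ha1, han⟩, hap⟩
    have hij : f i ≠ f j := hinj.ne hi hj (by omega)
    have := (hsep a i p j ha1 (by omega) (by omega) hpj hj.2).2
    omega

theorem IsSeparablePerm.isDecomposable {n : ℕ} {f : ℕ → ℕ} (hsep : IsSeparablePerm n f)
    (hinj : InjOn f (Icc 1 n)) (hn : 2 ≤ n) : IsDecomposable n f := by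
  induction n, hn using Nat.le_induction generalizing f with
  | base =>
    refine ⟨1, le_rfl, one_lt_two, ?_⟩
    have h12 : 1 ∈ Icc 1 2 ∧ 2 ∈ Icc 1 2 := ⟨⟨le_rfl, one_le_two⟩, ⟨one_le_two, le_rfl⟩⟩
    have hcut : ∀ i ∈ Icc 1 2, ∀ j ∈ Icc 1 2, i ≤ 1 → 1 < j → i = 1 ∧ j = 2 :=
      fun i hi j hj hi1 h1j => ⟨by have := hi.1; omega, by have := hj.2; omega⟩
    rcases (hinj.ne h12.1 h12.2 (by norm_num)).lt_or_gt with h | h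
    · exact .inl fun i hi j hj hi1 h1j => by obtain ⟨rfl, rfl⟩ := hcut i hi j hj hi1 h1j; exact h
    · exact .inr fun i hi j hj hi1 h1j => by obtain ⟨rfl, rfl⟩ := hcut i hi j hj hi1 h1j; exact h
  | succ n hn ih =>
    obtain ⟨p, hp, hmax⟩ := (Finset.Icc 1 (n + 1)).exists_max_image f ⟨1, by simp⟩
    rw [Finset.mem_Icc] at hp
    have hbij := Nat.bijOn_succAbove hp
    have hmaps : MapsTo (Nat.succAbove p) (Icc 1 n) (Icc 1 (n + 1)) :=
      hbij.mapsTo.mono_right sdiff_subset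
    have hmax' : ∀ i ∈ Icc 1 (n + 1) \ {p}, f i < f p := fun i hi =>
      (hmax i (Finset.mem_Icc.2 hi.1)).lt_of_ne (hinj.ne hi.1 hp hi.2)
    have hmono := Nat.succAbove_strictMono p
    obtain ⟨k, hk1, hkn, hcut⟩ := ih (hsep.comp hmono hmaps) (hinj.comp hbij.injOn hmaps)
    have ha := hbij.mapsTo (⟨le_rfl, by omega⟩ : 1 ∈ Icc 1 n)
    have hb := hbij.mapsTo (⟨by omega, by omega⟩ : k + 1 ∈ Icc 1 n)
    rcases hcut with hcut | hcut
    · exact isDecomposable_of_isCut_lt_sdiff_max hsep hinj hp hmax'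
        (hcut.of_comp hmono hbij.surjOn) ha (hmono.monotone hk1) hb (hmono k.lt_succ_self)
    · exact isDecomposable_of_isCut_gt_sdiff_max hsep hinj hp hmax'
        (hcut.of_comp hmono hbij.surjOn) ha (hmono.monotone hk1) hb (hmono k.lt_succ_self)

namespace IsPermOn

variable {n k j : ℕ} {π : ℕ → ℕ}

theorem apply_notMem (hπ : IsPermOn n π) {T : Finset ℕ} (hT : T.card ≤ k)
    (hmaps : ∀ i ∈ Icc 1 k, π i ∈ T) (hj : j ∈ Ioc k n) : π j ∉ T := by
  obtain ⟨hkj, hjn⟩ := hj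
  intro hjT
  have hsub : ↑(insert j (Finset.Icc 1 k)) ⊆ Icc 1 n := by
    simp only [Finset.coe_insert, Finset.coe_Icc, insert_subset_iff]
    exact ⟨⟨by omega, hjn⟩, Icc_subset_Icc_right (by omega)⟩
  have hcard := Finset.card_le_card_of_injOn π (t := T)
    (by simpa [Set.MapsTo] using ⟨hjT, fun i h1 h2 => hmaps i ⟨h1, h2⟩⟩) (hπ.injOn.mono hsub)
  rw [Finset.card_insert_of_notMem (by simp; omega), Nat.card_Icc] at hcard
  omega

theorem lt_apply_of_forall_mem_Icc (hπ : IsPermOn n π) (hset : ∀ i ∈ Icc 1 k, π i ∈ Icc 1 k)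
    (hj : j ∈ Ioc k n) : k < π j := by
  have hnot := hπ.apply_notMem (T := Finset.Icc 1 k) (by simp)
    (fun i hi => Finset.mem_Icc.2 (hset i hi)) hj
  have h1 := (hπ.mapsTo ⟨by have := hj.1; omega, hj.2⟩).1
  simp only [Finset.mem_Icc, not_and, not_le] at hnot
  exact hnot h1

theorem apply_le_of_forall_mem_Icc (hπ : IsPermOn n π)
    (hset : ∀ i ∈ Icc 1 k, π i ∈ Icc (n - k + 1) n) (hj : j ∈ Ioc k n) : π j ≤ n - k := by
  have hnot := hπ.apply_notMem (T := Finset.Icc (n - k + 1) n) (by simp; omega)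
    (fun i hi => Finset.mem_Icc.2 (hset i hi)) hj
  have h1 := (hπ.mapsTo ⟨by have := hj.1; omega, hj.2⟩).2
  simp only [Finset.mem_Icc, not_and, not_le] at hnot
  by_contra h
  exact (hnot (by omega)).not_ge h1

theorem isCut_lt_iff (hπ : IsPermOn n π) (hk : k ≤ n) :
    IsCut (· < ·) (Icc 1 n) π k ↔ ∀ i ∈ Icc 1 k, π i ∈ Icc 1 k := by
  refine ⟨fun hcut i hi => ?_, fun hset i hi j hj hik hkj =>
    (hset i ⟨hi.1, hik⟩).2.trans_lt (hπ.lt_apply_of_forall_mem_Icc hset ⟨hkj, hj.2⟩)⟩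
  have hi' : i ∈ Icc 1 n := ⟨hi.1, hi.2.trans hk⟩
  have hmaps : ∀ j ∈ Finset.Icc (k + 1) n, π j ∈ Finset.Ioc (π i) n := fun j hj => by
    rw [Finset.mem_Icc] at hj
    exact Finset.mem_Ioc.2 ⟨hcut i hi' j ⟨by omega, hj.2⟩ hi.2 (by omega),
      (hπ.mapsTo ⟨by omega, hj.2⟩).2⟩
  have hcard := Finset.card_le_card_of_injOn π hmaps (hπ.injOn.mono (by simp [Icc_subset_Icc]))
  simp only [Nat.card_Icc, Nat.card_Ioc] at hcard
  have := hπ.mapsTo hi'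
  exact ⟨this.1, by have := this.2; omega⟩

theorem isCut_gt_iff (hπ : IsPermOn n π) (hk : k ≤ n) :
    IsCut (· > ·) (Icc 1 n) π k ↔ ∀ i ∈ Icc 1 k, π i ∈ Icc (n - k + 1) n := by
  refine ⟨fun hcut i hi => ?_, fun hset i hi j hj hik hkj =>
    (hπ.apply_le_of_forall_mem_Icc hset ⟨hkj, hj.2⟩).trans_lt (hset i ⟨hi.1, hik⟩).1⟩
  have hi' : i ∈ Icc 1 n := ⟨hi.1, hi.2.trans hk⟩
  have hmaps : ∀ j ∈ Finset.Icc (k + 1) n, π j ∈ Finset.Ico 1 (π i) := fun j hj => by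
    rw [Finset.mem_Icc] at hj
    exact Finset.mem_Ico.2 ⟨(hπ.mapsTo ⟨by omega, hj.2⟩).1,
      hcut i hi' j ⟨by omega, hj.2⟩ hi.2 (by omega)⟩
  have hcard := Finset.card_le_card_of_injOn π hmaps (hπ.injOn.mono (by simp [Icc_subset_Icc]))
  simp only [Nat.card_Icc, Nat.card_Ico] at hcard
  have := hπ.mapsTo hi'
  exact ⟨by have := this.1; omega, this.2⟩

end IsPermOn

/-- A permutation of [n] (n ≥ 1) is separable iff n = 1 or it is a direct sum
or a skew sum of two nonempty separable permutations. -/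
theorem stmt13 (n : ℕ) (π : ℕ → ℕ) (hn : 1 ≤ n) (hperm : IsPermOn n π) :
    IsSeparablePerm n π ↔
      (n = 1 ∨
       (∃ k, 1 ≤ k ∧ k < n ∧ (∀ i ∈ Set.Icc 1 k, π i ∈ Set.Icc 1 k) ∧
          IsSeparablePerm k π ∧ IsSeparablePerm (n - k) (fun j => π (k + j) - k)) ∨
       (∃ k, 1 ≤ k ∧ k < n ∧
          (∀ i ∈ Set.Icc 1 k, π i ∈ Set.Icc (n - k + 1) n) ∧
          IsSeparablePerm k (fun i => π i - (n - k)) ∧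
          IsSeparablePerm (n - k) (fun j => π (k + j)))) := by
  have right_block {k : ℕ} (hset : ∀ i ∈ Icc 1 k, π i ∈ Icc 1 k) :
      ∀ j ∈ Icc 1 (n - k), k ≤ π (k + j) := fun j ⟨h1, h2⟩ =>
    (hperm.lt_apply_of_forall_mem_Icc hset ⟨by omega, by omega⟩).le
  have left_block {k : ℕ} (hset : ∀ i ∈ Icc 1 k, π i ∈ Icc (n - k + 1) n) :
      ∀ i ∈ Icc 1 k, n - k ≤ π i := fun i hi => by have := (hset i hi).1; omega
  constructor
  · intro hsep
    obtain rfl | hn2 := hn.eq_or_lt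
    · exact .inl rfl
    obtain ⟨k, hk1, hkn, hsum | hskew⟩ := hsep.isDecomposable hperm.injOn hn2
    · have hset := (hperm.isCut_lt_iff hkn.le).1 hsum
      exact .inr (.inl ⟨k, hk1, hkn, hset, hsep.of_le hkn.le,
        (isSeparablePerm_sub_iff (right_block hset)).2 (hsep.shift k)⟩)
    · have hset := (hperm.isCut_gt_iff hkn.le).1 hskew
      exact .inr (.inr ⟨k, hk1, hkn, hset,
        (isSeparablePerm_sub_iff (left_block hset)).2 (hsep.of_le hkn.le), hsep.shift k⟩)
  · rintro (rfl | ⟨k, hk1, hkn, hset, hleft, hright⟩ | ⟨k, hk1, hkn, hset, hleft, hright⟩)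
    · intro i1 i2 i3 i4 h1 h12 h23 h34 h4
      omega
    · exact .of_isCut (.inl ((hperm.isCut_lt_iff hkn.le).2 hset)) hleft
        ((isSeparablePerm_sub_iff (right_block hset)).1 hright)
    · exact .of_isCut (.inr ((hperm.isCut_gt_iff hkn.le).2 hset))
        ((isSeparablePerm_sub_iff (left_block hset)).1 hleft) hright
end

section
/- Let π be a Baxter permutation of [n], i a position, and t+1 = NLV(i). Define a sequence r_0 = t+1 and r_{m+1} = NSV(r_m) (next smaller value). If for some m we have π(r_m) > π(i) and π(r_{m+1}) < π(i), then there is no position q > r_{m+1} with π(i) < π(q) < π(r_m) such that π(p) < π(q) for all r_{m+1} ≤ p < q; i.e., any such q would create a 3-14-2 pattern in π. -/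
/-- Termination correctness of the neighbor enumeration: starting from
j = NLV(i) and iterating NSV via the sequence r, once π(r m) > π(i) and
π(r (m+1)) < π(i), no further position q (reachable as a next-smaller-value,
i.e., all values in between are smaller than π(q)) satisfies
π(i) < π(q) < π(r m); such a q would create a 3-14-2 pattern. -/
theorem stmt16 (n : ℕ) (π : ℕ → ℕ) (i j m : ℕ) (r : ℕ → ℕ)
    (hbax : IsBaxter n π) (hperm : IsPermOn n π)
    (hi : 1 ≤ i) (hij : i < j) (hj : j ≤ n)
    (hnlv : π i < π j ∧ ∀ k, i < k → k < j → π k < π i)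
    (hr0 : r 0 = j)
    (hstep : ∀ m' ≤ m, r m' < r (m' + 1) ∧ r (m' + 1) ≤ n ∧
      π (r (m' + 1)) < π (r m') ∧
      ∀ k, r m' < k → k < r (m' + 1) → π (r m') < π k)
    (habove : π i < π (r m)) (hbelow : π (r (m + 1)) < π i) :
    ¬ ∃ q, r (m + 1) < q ∧ q ≤ n ∧ π i < π q ∧ π q < π (r m) ∧
      ∀ p, r (m + 1) ≤ p → p < q → π p < π q := by
  rintro ⟨q, hq1, hq2, hq3, hq4, hq5⟩
  have key : ∀ m', m' ≤ m → j ≤ r m' := by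
    intro m' hm'
    induction m' with
    | zero => omega
    | succ k ih =>
      have h := (hstep k (by omega)).1
      have := ih (by omega)
      omega
  have hrm : j ≤ r m := key m le_rfl
  have hs := hstep m le_rfl
  set j2 := r (m + 1) - 1 with hj2def
  have hj2 : j2 + 1 = r (m + 1) := by omega
  have hij2 : i < j2 := by omega
  have hqj2 : π q < π j2 := by
    by_cases hc : r (m + 1) = r m + 1
    · have : j2 = r m := by omega
      rw [this]; exact hq4
    · exact lt_trans hq4 (hs.2.2.2 j2 (by omega) (by omega))
  exact (hbax i j2 q hi hij2 (by omega) hq2).1 (by rw [hj2]; exact ⟨hbelow, hq3, hqj2⟩)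
end

section
/- Let π be an alternating permutation of [n] (values rise and descend alternately) with π(1) < π(2) and π(n−1) > π(n), and let π' be the permutation of [n+2] obtained by prepending n+1 and appending n+2 to π. Then every node of MinC(π') has either zero or two children (MinC(π') is a full binary tree). -/
/-- A binary tree is full if no node has exactly one child. -/
def BTree.full : BTree → Prop
  | .leaf => True
  | .node l _ r => ((l = .leaf) ↔ (r = .leaf)) ∧ l.full ∧ r.full

def GoodL (L : List ℕ) : Prop :=
  Odd L.length ∧ ∀ i, i + 1 < L.length → (L.getD (i+1) 0 < L.getD i 0 ↔ Even i)

lemma isMinC_nil : ∀ {L : List ℕ} {t}, IsMinC L t → L = [] → t = .leaf := by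
  intro L t h
  cases h with
  | leaf => intro _; rfl
  | node l r x tl tr => intro he; simp at he

lemma isMinC_leaf : ∀ {L : List ℕ}, IsMinC L .leaf → L = [] := by
  intro L h; cases h; rfl

lemma getD_mem_s19 {l : List ℕ} {i : ℕ} (h : i < l.length) : l.getD i 0 ∈ l := by
  rw [List.getD_eq_getElem _ _ h]; exact List.getElem_mem h

lemma aux : ∀ {L : List ℕ} {t}, IsMinC L t → GoodL L → t.full := by
  intro L t h
  induction h with
  | leaf => intro _; trivial
  | node l r x tl tr hl hr ml mr ihl ihr =>
    rintro ⟨hodd, hcmp⟩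
    have hlen : (l ++ x :: r).length = l.length + r.length + 1 := by
      simp [List.length_append]; omega
    have hgx : (l ++ x :: r).getD l.length 0 = x := by
      rw [List.getD_append_right _ _ _ _ le_rfl]; simp
    have hgl : ∀ i, i < l.length → (l ++ x :: r).getD i 0 = l.getD i 0 := fun i hi =>
      List.getD_append _ _ _ _ hi
    have hgr : ∀ j, (l ++ x :: r).getD (l.length + 1 + j) 0 = r.getD j 0 := by
      intro j
      rw [List.getD_append_right _ _ _ _ (by omega)]
      have : l.length + 1 + j - l.length = j + 1 := by omega
      rw [this]; simp
    rcases eq_or_ne l [] with rfl | hle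
    · rcases eq_or_ne r [] with rfl | hre
      · refine ⟨?_, ?_, ?_⟩
        · rw [isMinC_nil ml rfl, isMinC_nil mr rfl]
        · rw [isMinC_nil ml rfl]; trivial
        · rw [isMinC_nil mr rfl]; trivial
      · exfalso
        have hr1 : 0 < r.length := List.length_pos_iff.mpr hre
        have h0 := (hcmp 0 (by simp; omega)).mpr (by simp)
        have e0 : (([] : List ℕ) ++ x :: r).getD 0 0 = x := rfl
        have e1 : (([] : List ℕ) ++ x :: r).getD 1 0 = r.getD 0 0 := by
          simpa using hgr 0
        rw [e0, e1] at h0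
        exact absurd h0 (Nat.not_lt.mpr (le_of_lt (hr (r.getD 0 0) (getD_mem_s19 hr1))))
    · have hl1 : 0 < l.length := List.length_pos_iff.mpr hle
      -- Odd l.length
      have hmo : Odd l.length := by
        obtain ⟨k, hk⟩ : ∃ k, l.length = k + 1 := ⟨l.length - 1, by omega⟩
        have hck := hcmp k (by omega)
        rw [hk] at hgx
        have hlk : (l ++ x :: r).getD k 0 = l.getD k 0 := hgl k (by omega)
        have hmem : l.getD k 0 ∈ l := getD_mem_s19 (by omega)
        have : x < l.getD k 0 := hl _ hmem
        rw [hgx, hlk] at hck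
        have hek : Even k := hck.mp this
        rw [hk, Nat.odd_add_one, Nat.not_odd_iff_even]; exact hek
      rcases eq_or_ne r [] with rfl | hre
      · exfalso
        have hlen' : (l ++ [x]).length = l.length + 1 := by simp
        rw [hlen'] at hodd
        rcases hmo with ⟨a, ha⟩; rcases hodd with ⟨b, hb⟩; omega
      · have hr1 : 0 < r.length := List.length_pos_iff.mpr hre
        have hro : Odd r.length := by
          rw [hlen] at hodd
          rcases hmo with ⟨a, ha⟩
          rcases Nat.even_or_odd r.length with ⟨b, hb⟩ | h; swap
          · exact h
          exfalso; rcases hodd with ⟨c, hc⟩; omega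
        refine ⟨?_, ihl ⟨hmo, ?_⟩, ihr ⟨hro, ?_⟩⟩
        · constructor
          · intro h; exact absurd (isMinC_leaf (h ▸ ml)) hle
          · intro h; exact absurd (isMinC_leaf (h ▸ mr)) hre
        · intro i hi
          have h1 := hcmp i (by omega)
          rw [hgl i (by omega), hgl (i+1) (by omega)] at h1
          exact h1
        · intro j hj
          have h1 := hcmp (l.length + 1 + j) (by omega)
          have e1 : l.length + 1 + j + 1 = l.length + 1 + (j + 1) := by omega
          rw [e1, hgr (j+1), hgr j] at h1
          rw [h1]
          rcases hmo with ⟨a, ha⟩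
          constructor
          · rintro ⟨b, hb⟩; exact ⟨b - a - 1, by omega⟩
          · rintro ⟨b, hb⟩; exact ⟨a + 1 + b, by omega⟩

/-- For an alternating permutation π with π(1) < π(2) and π(n−1) > π(n),
prepending n+1 and appending n+2 makes the minimum Cartesian tree a full
binary tree. -/
theorem stmt19 (n : ℕ) (π : ℕ → ℕ) (tr : BTree) (hn : 2 ≤ n)
    (hperm : IsPermOn n π)
    (halt : ∀ u, 1 ≤ u → u + 2 ≤ n → (π u < π (u + 1) ↔ π (u + 2) < π (u + 1)))
    (hfirst : π 1 < π 2) (hlast : π n < π (n - 1))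
    (ht : IsMinC ((n + 1) :: permList n π ++ [n + 2]) tr) :
    tr.full := by
  have hmap : ∀ i, 1 ≤ i → i ≤ n → 1 ≤ π i ∧ π i ≤ n := by
    intro i h1 h2
    have := hperm.mapsTo (Set.mem_Icc.mpr ⟨h1, h2⟩)
    exact Set.mem_Icc.mp this
  have hinj : ∀ i j, 1 ≤ i → i ≤ n → 1 ≤ j → j ≤ n → π i = π j → i = j := by
    intro i j h1 h2 h3 h4 he
    exact hperm.injOn (Set.mem_Icc.mpr ⟨h1, h2⟩) (Set.mem_Icc.mpr ⟨h3, h4⟩) he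
  have key : ∀ u, 1 ≤ u → u + 1 ≤ n → (π u < π (u + 1) ↔ Odd u) := by
    intro u
    induction u with
    | zero => omega
    | succ v ih =>
      intro _ hle
      rcases Nat.eq_zero_or_pos v with rfl | hv
      · simpa using hfirst
      · have h1 := ih hv (by omega)
        have h2 := halt v hv (by omega)
        have hne : π (v + 1) ≠ π (v + 2) := by
          intro h; have := hinj (v+1) (v+2) (by omega) (by omega) (by omega) (by omega) h; omega
        rw [Nat.odd_add_one, ← h1]
        show π (v + 1) < π (v + 2) ↔ ¬(π v < π (v + 1))
        omega
  have hnodd : Odd n := by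
    obtain ⟨m, rfl⟩ : ∃ m, n = m + 1 := ⟨n - 1, by omega⟩
    have hk := key m (by omega) (by omega)
    have : ¬ π m < π (m + 1) := by
      simp only [Nat.add_sub_cancel] at hlast; omega
    rw [Nat.odd_add_one, ← hk]
    exact this
  set L : List ℕ := (n + 1) :: permList n π ++ [n + 2] with hL
  have hplen : (permList n π).length = n := by simp [permList]
  have hlen : L.length = n + 2 := by simp [hL, permList]
  have hg0 : L.getD 0 0 = n + 1 := rfl
  have hgi : ∀ i, 1 ≤ i → i ≤ n → L.getD i 0 = π i := by
    intro i h1 h2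
    obtain ⟨j, rfl⟩ : ∃ j, i = j + 1 := ⟨i - 1, by omega⟩
    have : L.getD (j + 1) 0 = (permList n π ++ [n + 2]).getD j 0 := rfl
    rw [this, List.getD_append _ _ _ _ (by omega)]
    rw [List.getD_eq_getElem _ _ (by omega : j < (permList n π).length)]
    simp [permList]
  have hglast : L.getD (n + 1) 0 = n + 2 := by
    have : L.getD (n + 1) 0 = (permList n π ++ [n + 2]).getD n 0 := rfl
    rw [this, List.getD_append_right _ _ _ _ (by omega)]
    simp [hplen]
  apply aux ht
  constructor
  · rw [hlen]; rcases hnodd with ⟨k, hk⟩; exact ⟨k + 1, by omega⟩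
  · intro i hi
    rw [hlen] at hi
    rcases Nat.eq_zero_or_pos i with rfl | hi1
    · rw [hg0, hgi 1 le_rfl (by omega)]
      have := (hmap 1 le_rfl (by omega)).2
      simp; omega
    · rcases eq_or_ne i n with heq | hin
      case inl =>
        subst heq
        rw [hglast, hgi i (by omega) le_rfl]
        have := (hmap i (by omega) le_rfl).2
        constructor
        · intro h; omega
        · intro h; exfalso
          rw [← Nat.not_odd_iff_even] at h; exact h hnodd
      case inr =>
        have hi2 : i + 1 ≤ n := by omega
        rw [hgi i hi1 (by omega), hgi (i + 1) (by omega) hi2]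
        have hk := key i hi1 hi2
        have hne : π i ≠ π (i + 1) := by
          intro h; have := hinj i (i+1) hi1 (by omega) (by omega) hi2 h; omega
        rw [← Nat.not_odd_iff_even, ← hk]
        omega
end
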